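/- arXiv:2505.19285 — 6 statements merged into one kernel-verified Lean document; each statement's English description precedes it below -/
import Mathlib

section
/- Let X be a tree (a connected acyclic simple graph) and let g be a graph automorphism of X whose set Fix(g) of fixed vertices is nonempty. Then for every vertex x of X, the graph distance satisfies d(g·x, x) = 2·d(x, Fix(g)), where d(x, Fix(g)) is the minimum of d(x,v) over fixed vertices v. -/
open SimpleGraph

private lemma aux_iso_dist {V : Type*} {G : SimpleGraph V} (hconn : G.Connected)
    (g : G ≃g G) (a b : V) : G.dist (g a) (g b) = G.dist a b := by
  have key : ∀ (h : G ≃g G) (a b : V), G.dist (h a) (h b) ≤ G.dist a b := by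
    intro h a b
    obtain ⟨p, hp⟩ := hconn.exists_walk_length_eq_dist a b
    calc G.dist (h a) (h b) ≤ (p.map h.toHom).length := SimpleGraph.dist_le _
      _ = p.length := SimpleGraph.Walk.length_map _ _
      _ = G.dist a b := hp
  refine le_antisymm (key g a b) ?_
  have := key g.symm (g a) (g b)
  simpa using this

private lemma aux_dist_getVert_le {V : Type*} {G : SimpleGraph V} (hconn : G.Connected)
    {a b : V} (p : G.Walk a b) : ∀ i, G.dist a (p.getVert i) ≤ i := by
  induction p with
  | nil => intro i; simp [SimpleGraph.Walk.getVert, SimpleGraph.dist_self]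
  | cons h q ih =>
    intro i
    cases i with
    | zero => simp [SimpleGraph.Walk.getVert]
    | succ n =>
      rw [SimpleGraph.Walk.getVert_cons_succ]
      calc G.dist _ _ ≤ G.dist _ _ + G.dist _ (q.getVert n) := hconn.dist_triangle
        _ ≤ 1 + n := by
            exact add_le_add (by rw [SimpleGraph.dist_eq_one_iff_adj.mpr h]) (ih n)
        _ = n + 1 := by omega

private lemma aux_dist_getVert_right_le {V : Type*} {G : SimpleGraph V} (hconn : G.Connected)
    {a b : V} (p : G.Walk a b) {i : ℕ} (hi : i ≤ p.length) :
    G.dist (p.getVert i) b ≤ p.length - i := by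
  have h1 := aux_dist_getVert_le hconn p.reverse (p.length - i)
  rw [SimpleGraph.Walk.getVert_reverse] at h1
  have : p.length - (p.length - i) = i := by omega
  rw [this] at h1
  rw [SimpleGraph.dist_comm]
  exact h1

/-- distances along a geodesic walk -/
private lemma aux_geo {V : Type*} {G : SimpleGraph V} (hconn : G.Connected)
    {a b : V} (p : G.Walk a b) (hgeo : p.length = G.dist a b) {i : ℕ} (hi : i ≤ p.length) :
    G.dist a (p.getVert i) = i ∧ G.dist (p.getVert i) b = p.length - i := by
  have h1 := aux_dist_getVert_le hconn p i
  have h2 := aux_dist_getVert_right_le hconn p hi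
  have h3 : G.dist a b ≤ G.dist a (p.getVert i) + G.dist (p.getVert i) b :=
    hconn.dist_triangle
  constructor <;> omega

/-- For a graph automorphism `g` of a tree `X` with nonempty fixed-vertex set,
`d(g·x, x) = 2 · d(x, Fix(g))` for every vertex `x`. -/
theorem stmt_0 {V : Type*} (G : SimpleGraph V) (hG : G.IsTree)
    (g : G ≃g G) (hfix : {v : V | g v = v}.Nonempty) (x : V) :
    G.dist (g x) x = 2 * sInf ((fun v => G.dist x v) '' {v : V | g v = v}) := by
  classical
  obtain ⟨hconn, hacyc⟩ := hG
  set S : Set V := {v : V | g v = v} with hS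
  set m : ℕ := sInf ((fun v => G.dist x v) '' S) with hm
  obtain ⟨v, hvS, hvm⟩ : ∃ v ∈ S, G.dist x v = m :=
    Nat.sInf_mem (hfix.image (fun v => G.dist x v))
  have hmin : ∀ w, g w = w → m ≤ G.dist x w := by
    intro w hw
    exact Nat.sInf_le ⟨w, hw, rfl⟩
  have hgv : g v = v := hvS
  -- geodesic path from x to v
  obtain ⟨p, hpPath, hplen⟩ := hconn.exists_path_of_dist x v
  have hplen' : p.length = m := by rw [hplen, hvm]
  -- its image under g
  set q : G.Walk (g x) v := (p.map g.toHom).copy rfl hgv with hq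
  have hqlen : q.length = m := by
    simp [hq, SimpleGraph.Walk.length_map, hplen']
  have hqPath : q.IsPath := by
    rw [hq, SimpleGraph.Walk.isPath_copy]
    exact p.map_isPath_of_injective g.injective hpPath
  have hqsupp : q.support = p.support.map g := by
    simp [hq, SimpleGraph.Walk.support_map]
  -- key claim : a vertex on both q and p equals v
  have key : ∀ u, u ∈ q.support → u ∈ p.support → u = v := by
    intro u huq hup
    rw [hqsupp, List.mem_map] at huq
    obtain ⟨w, hwp, hwu⟩ := huq
    obtain ⟨j, hju, hj⟩ := SimpleGraph.Walk.mem_support_iff_exists_getVert.mp hwp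
    obtain ⟨i, hiu, hi⟩ := SimpleGraph.Walk.mem_support_iff_exists_getVert.mp hup
    have hgeoJ := aux_geo hconn p hplen hj
    have hgeoI := aux_geo hconn p hplen hi
    rw [hju] at hgeoJ
    rw [hiu] at hgeoI
    -- dist u v = dist w v
    have hduv : G.dist u v = G.dist w v := by
      have h0 := aux_iso_dist hconn g w v
      rw [hgv] at h0
      rw [← hwu]
      exact h0
    have hij : i = j := by
      have h1 : G.dist u v = p.length - i := hgeoI.2
      have h2 : G.dist w v = p.length - j := hgeoJ.2
      omega
    have huw : u = w := by rw [← hiu, ← hju, hij]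
    -- u is fixed
    have hufix : g u = u := by rw [huw] at hwu ⊢; exact hwu
    have : m ≤ G.dist x u := hmin u hufix
    have : i = p.length := by
      have := hgeoI.1
      omega
    rw [← hiu, this, SimpleGraph.Walk.getVert_length]
  -- the concatenated walk
  set r : G.Walk (g x) x := q.append p.reverse with hr
  have hrlen : r.length = 2 * m := by
    simp only [hr, SimpleGraph.Walk.length_append, SimpleGraph.Walk.length_reverse, hqlen, hplen']
    omega
  have hrPath : r.IsPath := by
    rw [hr, SimpleGraph.Walk.isPath_def, SimpleGraph.Walk.support_append]
    refine List.Nodup.append hqPath.support_nodup ?_ ?_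
    · exact (hpPath.reverse.support_nodup).tail
    · intro u huq hupt
      have hup : u ∈ p.support := by
        have : u ∈ p.reverse.support := List.mem_of_mem_tail hupt
        rwa [SimpleGraph.Walk.support_reverse, List.mem_reverse] at this
      have huv : u = v := key u huq hup
      -- but v is the head of p.reverse.support and it's nodup, so v ∉ tail
      have hnodup := hpPath.reverse.support_nodup
      have hhead : p.reverse.support = v :: p.reverse.support.tail := by
        rw [← SimpleGraph.Walk.support_eq_cons]
      rw [hhead] at hnodup
      exact (List.nodup_cons.mp hnodup).1 (huv ▸ hupt)
  -- the geodesic path from g x to x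
  obtain ⟨P, hPPath, hPlen⟩ := hconn.exists_path_of_dist (g x) x
  have : (⟨P, hPPath⟩ : G.Path (g x) x) = ⟨r, hrPath⟩ := hacyc.path_unique _ _
  have hPr : P = r := congrArg Subtype.val this
  rw [← hPlen, hPr, hrlen]
end

section
/- Let q ≥ 2 be an integer, X an infinite (q+1)-regular tree, A an apartment of X, b a vertex, δ = d(b,A), and a a vertex of A with d(a,b) = δ. Let α, β ≥ 0 be integers and let S = {v : d(v,A) ≤ α and d(v,b) ≤ β}. Then: (1) B_α(a) ∩ B_β(b) ⊆ S; (2) if δ ≥ β − α, then S = B_α(a) ∩ B_β(b); (3) if δ < β − α, then B_α(a) ⊊ S ⊊ B_β(b), each inclusion being strict. -/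
open SimpleGraph

section TreeAux

variable {V : Type*} {G : SimpleGraph V} [DecidableEq V]

/-- In a tree, every path realizes the distance. -/
private lemma tree_path_length_eq_dist (hG : G.IsTree) {x y : V} {p : G.Walk x y}
    (hp : p.IsPath) : p.length = G.dist x y := by
  obtain ⟨w, hw⟩ := hG.isConnected.exists_walk_length_eq_dist x y
  have hb : w.bypass = p :=
    congrArg Subtype.val (hG.IsAcyclic.path_unique ⟨w.bypass, w.bypass_isPath⟩ ⟨p, hp⟩)
  refine le_antisymm ?_ (dist_le p)
  calc p.length = w.bypass.length := by rw [hb]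
    _ ≤ w.length := w.length_bypass_le
    _ = G.dist x y := hw

/-- In a tree, the support of the path is contained in the support of any walk. -/
private lemma tree_path_support_subset_walk (hG : G.IsTree) {x y : V} {p : G.Walk x y}
    (hp : p.IsPath) (w : G.Walk x y) : p.support ⊆ w.support := by
  have hb : w.bypass = p :=
    congrArg Subtype.val (hG.IsAcyclic.path_unique ⟨w.bypass, w.bypass_isPath⟩ ⟨p, hp⟩)
  rw [← hb]; exact w.support_bypass_subset

/-- Splitting distance at a vertex on a path. -/
private lemma tree_dist_split (hG : G.IsTree) {x y z : V} {p : G.Walk x z}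
    (hp : p.IsPath) (hy : y ∈ p.support) :
    G.dist x y + G.dist y z = G.dist x z := by
  have h1 := tree_path_length_eq_dist hG (hp.takeUntil hy)
  have h2 := tree_path_length_eq_dist hG (hp.dropUntil hy)
  have h3 := congrArg Walk.length (p.take_spec hy)
  rw [Walk.length_append] at h3
  have h4 := tree_path_length_eq_dist hG hp
  omega

private lemma tree_append_path (hG : G.IsTree) {x y z : V} {p : G.Walk x y} {q : G.Walk y z}
    (hp : p.IsPath) (hq : q.IsPath)
    (hdisj : ∀ t, t ∈ p.support → t ∈ q.support → t = y) : (p.append q).IsPath := by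
  apply Walk.IsPath.mk'
  rw [Walk.support_append, List.nodup_append]
  refine ⟨hp.support_nodup, hq.support_nodup.tail, ?_⟩
  intro t htp s htq hts
  subst hts
  have h1 : t ∈ q.support := List.mem_of_mem_tail htq
  have h2 := hdisj t htp h1
  subst h2
  have := hq.support_nodup
  rw [q.support_eq_cons] at this
  exact (List.nodup_cons.mp this).1 htq

/-- If the distance splits at `y`, then `y` lies on the path from `x` to `z`. -/
private lemma tree_mem_path_support (hG : G.IsTree) {x y z : V}
    (h : G.dist x y + G.dist y z = G.dist x z) {p : G.Walk x z} (hp : p.IsPath) :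
    y ∈ p.support := by
  obtain ⟨p1, hp1, -⟩ := hG.existsUnique_path x y
  obtain ⟨p2, hp2, -⟩ := hG.existsUnique_path y z
  have happ : (p1.append p2).IsPath := by
    apply tree_append_path hG hp1 hp2
    intro t ht1 ht2
    have e1 := tree_dist_split hG hp1 ht1
    have e2 := tree_dist_split hG hp2 ht2
    have tri := hG.isConnected.dist_triangle (u := x) (v := t) (w := z)
    have hc : G.dist t y = G.dist y t := dist_comm
    have hty : G.dist t y = 0 := by omega
    exact (hG.isConnected.dist_eq_zero_iff).mp hty
  have heq : p1.append p2 = p := by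
    obtain ⟨pp, hpp, huniq⟩ := hG.existsUnique_path x z
    rw [huniq _ happ, huniq _ hp]
  rw [← heq, Walk.mem_support_append_iff]
  exact Or.inl p1.end_mem_support

/-- Unique neighbour towards a target. -/
private lemma tree_toward_eq (hG : G.IsTree) {v w w' y : V} (h : G.Adj v w) (h' : G.Adj v w')
    (hd : G.dist w y + 1 = G.dist v y) (hd' : G.dist w' y + 1 = G.dist v y) : w = w' := by
  obtain ⟨p, hp, -⟩ := hG.existsUnique_path w y
  obtain ⟨p', hp', -⟩ := hG.existsUnique_path w' y
  have hv : v ∉ p.support := by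
    intro hv
    have hsplit := tree_dist_split hG hp hv
    have h1 : G.dist w v = 1 := dist_eq_one_iff_adj.mpr h.symm
    omega
  have hv' : v ∉ p'.support := by
    intro hv'
    have hsplit := tree_dist_split hG hp' hv'
    have h1 : G.dist w' v = 1 := dist_eq_one_iff_adj.mpr h'.symm
    omega
  have c1 : (Walk.cons h p).IsPath := hp.cons hv
  have c2 : (Walk.cons h' p').IsPath := hp'.cons hv'
  obtain ⟨pp, hpp, huniq⟩ := hG.existsUnique_path v y
  have e : Walk.cons h p = Walk.cons h' p' := by rw [huniq _ c1, huniq _ c2]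
  have hs := congrArg Walk.support e
  rw [Walk.support_cons, Walk.support_cons, p.support_eq_cons, p'.support_eq_cons] at hs
  simp only [List.cons.injEq] at hs
  exact hs.2.1

variable (γ : ℤ → V)

/-- Walk along `γ` from `γ m` to `γ (m+k)`, with support inside the range of `γ`. -/
private lemma gamma_walk (hadj : ∀ n : ℤ, G.Adj (γ n) (γ (n + 1))) :
    ∀ (k : ℕ) (m : ℤ), ∃ w : G.Walk (γ m) (γ (m + k)),
      ∀ x ∈ w.support, x ∈ Set.range γ := by
  intro k
  induction k with
  | zero =>
    intro m
    refine ⟨Walk.nil.copy rfl (congrArg γ (by push_cast; ring)), ?_⟩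
    intro x hx
    rw [Walk.support_copy] at hx
    simp only [Walk.support_nil, List.mem_singleton] at hx
    exact ⟨m, hx.symm⟩
  | succ k ih =>
    intro m
    obtain ⟨w, hw⟩ := ih (m + 1)
    refine ⟨(Walk.cons (hadj m) w).copy rfl (congrArg γ (by push_cast; ring)), ?_⟩
    intro x hx
    rw [Walk.support_copy, Walk.support_cons] at hx
    rcases List.mem_cons.mp hx with rfl | hx
    · exact ⟨m, rfl⟩
    · exact hw x hx

private lemma gamma_path_support_aux (hG : G.IsTree)
    (hadj : ∀ n : ℤ, G.Adj (γ n) (γ (n + 1))) {m n : ℤ} (hmn : m ≤ n)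
    {p : G.Walk (γ m) (γ n)} (hp : p.IsPath) : ∀ x ∈ p.support, x ∈ Set.range γ := by
  obtain ⟨w, hw⟩ := gamma_walk γ hadj (n - m).toNat m
  have hcast : m + ((n - m).toNat : ℤ) = n := by
    rw [Int.toNat_of_nonneg (sub_nonneg.mpr hmn)]; ring
  have w' := w.copy rfl (congrArg γ hcast)
  have hsub := tree_path_support_subset_walk hG hp (w.copy rfl (congrArg γ hcast))
  intro x hx
  have := hsub hx
  rw [Walk.support_copy] at this
  exact hw x this

private lemma gamma_path_support (hG : G.IsTree)
    (hadj : ∀ n : ℤ, G.Adj (γ n) (γ (n + 1))) {m n : ℤ}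
    {p : G.Walk (γ m) (γ n)} (hp : p.IsPath) : ∀ x ∈ p.support, x ∈ Set.range γ := by
  rcases le_total m n with hmn | hnm
  · exact gamma_path_support_aux γ hG hadj hmn hp
  · intro x hx
    refine gamma_path_support_aux γ hG hadj hnm hp.reverse x ?_
    rw [Walk.support_reverse]
    exact List.mem_reverse.mpr hx

/-- Gate property: if `u` realizes the distance from `v` to the apartment, then
for every `t` in the apartment `d(v,t) = d(v,u) + d(u,t)`. -/
private lemma tree_gate (hG : G.IsTree)
    (hadj : ∀ n : ℤ, G.Adj (γ n) (γ (n + 1))) {v u : V} (hu : u ∈ Set.range γ)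
    (hmin : ∀ t ∈ Set.range γ, G.dist v u ≤ G.dist v t) :
    ∀ t ∈ Set.range γ, G.dist v t = G.dist v u + G.dist u t := by
  intro t ht
  obtain ⟨m, rfl⟩ := hu
  obtain ⟨n, rfl⟩ := ht
  obtain ⟨p1, hp1, -⟩ := hG.existsUnique_path v (γ m)
  obtain ⟨p2, hp2, -⟩ := hG.existsUnique_path (γ m) (γ n)
  have happ : (p1.append p2).IsPath := by
    apply tree_append_path hG hp1 hp2
    intro x hx1 hx2
    have hxA : x ∈ Set.range γ := gamma_path_support γ hG hadj hp2 x hx2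
    by_contra hne
    have e1 := tree_dist_split hG hp1 hx1
    have hpos : 0 < G.dist x (γ m) := hG.isConnected.pos_dist_of_ne hne
    have := hmin x hxA
    omega
  have hlen := tree_path_length_eq_dist hG happ
  rw [Walk.length_append, tree_path_length_eq_dist hG hp1,
    tree_path_length_eq_dist hG hp2] at hlen
  omega

end TreeAux

/-- Intersection of a tube around an apartment and a ball in an infinite
(q+1)-regular tree: with `A` an apartment, `δ = d(b,A)`, `a ∈ A` realizing the
distance, and `S = {v : d(v,A) ≤ α ∧ d(v,b) ≤ β}`:
(1) `B_α(a) ∩ B_β(b) ⊆ S`; (2) if `δ ≥ β − α` then `S = B_α(a) ∩ B_β(b)`;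
(3) if `δ < β − α` then `B_α(a) ⊊ S ⊊ B_β(b)`. -/
theorem stmt_5 {V : Type*} (G : SimpleGraph V) (hG : G.IsTree) [Infinite V]
    (q : ℕ) (hq : 2 ≤ q)
    (hreg : ∀ v : V, (G.neighborSet v).ncard = q + 1)
    (γ : ℤ → V)
    (hadj : ∀ n : ℤ, G.Adj (γ n) (γ (n + 1)))
    (hgeo : ∀ m n : ℤ, G.dist (γ m) (γ n) = (m - n).natAbs)
    (b : V) (δ : ℕ)
    (hδ : sInf ((fun u => G.dist b u) '' Set.range γ) = δ)
    (a : V) (ha : a ∈ Set.range γ) (hab : G.dist a b = δ)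
    (α β : ℕ) :
    ({v : V | G.dist v a ≤ α} ∩ {v : V | G.dist v b ≤ β}
        ⊆ {v : V | sInf ((fun u => G.dist v u) '' Set.range γ) ≤ α ∧ G.dist v b ≤ β}) ∧
    ((β : ℤ) - (α : ℤ) ≤ (δ : ℤ) →
      {v : V | sInf ((fun u => G.dist v u) '' Set.range γ) ≤ α ∧ G.dist v b ≤ β}
        = {v : V | G.dist v a ≤ α} ∩ {v : V | G.dist v b ≤ β}) ∧
    ((δ : ℤ) < (β : ℤ) - (α : ℤ) →
      ({v : V | G.dist v a ≤ α}
          ⊂ {v : V | sInf ((fun u => G.dist v u) '' Set.range γ) ≤ α ∧ G.dist v b ≤ β}) ∧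
      ({v : V | sInf ((fun u => G.dist v u) '' Set.range γ) ≤ α ∧ G.dist v b ≤ β}
          ⊂ {v : V | G.dist v b ≤ β})) := by
  classical
  have hconn := hG.isConnected
  set A := Set.range γ with hA
  -- distance-to-apartment infimum facts
  have hDne : ∀ v : V, ((fun u => G.dist v u) '' A).Nonempty :=
    fun v => ⟨G.dist v (γ 0), ⟨γ 0, ⟨0, rfl⟩, rfl⟩⟩
  have hInf_le : ∀ (v t : V), t ∈ A →
      sInf ((fun u => G.dist v u) '' A) ≤ G.dist v t :=
    fun v t ht => Nat.sInf_le ⟨t, ht, rfl⟩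
  have hmin_ex : ∀ v : V, ∃ u ∈ A, G.dist v u = sInf ((fun u => G.dist v u) '' A) ∧
      ∀ t ∈ A, G.dist v u ≤ G.dist v t := by
    intro v
    obtain ⟨u, huA, hval⟩ := Nat.sInf_mem (hDne v)
    have hval' : G.dist v u = sInf ((fun u => G.dist v u) '' A) := hval
    exact ⟨u, huA, hval', fun t ht => le_of_eq_of_le hval' (hInf_le v t ht)⟩
  -- gate of b is a
  have hba : G.dist b a = δ := by rw [SimpleGraph.dist_comm]; exact hab
  have hbmin : ∀ t ∈ A, G.dist b a ≤ G.dist b t := by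
    intro t ht
    rw [hba, ← hδ]
    exact Nat.sInf_le ⟨t, ht, rfl⟩
  have hgb : ∀ t ∈ A, G.dist b t = δ + G.dist a t := by
    intro t ht
    have := tree_gate γ hG hadj ha hbmin t ht
    rw [hba] at this
    exact this
  -- key lemma: if the projection u of v is not a, then d(v,b) = d(v,u) + d(u,b)
  have key : ∀ v u : V, u ∈ A → (∀ t ∈ A, G.dist v u ≤ G.dist v t) → u ≠ a →
      G.dist v b = G.dist v u + G.dist u b := by
    intro v u huA hmin hua
    have hga := tree_gate γ hG hadj huA hmin a ha
    obtain ⟨pva, hpva, -⟩ := hG.existsUnique_path v a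
    have humem : u ∈ pva.support := tree_mem_path_support hG (by omega) hpva
    obtain ⟨pvb, hpvb, -⟩ := hG.existsUnique_path v b
    obtain ⟨pba, hpba, -⟩ := hG.existsUnique_path b a
    have hsub : pva.support ⊆ (pvb.append pba).support :=
      tree_path_support_subset_walk hG hpva _
    have := hsub humem
    rw [Walk.mem_support_append_iff] at this
    rcases this with hmem | hmem
    · exact (tree_dist_split hG hpvb hmem).symm
    · exfalso
      have e := tree_dist_split hG hpba hmem
      have e2 := hgb u huA
      have e3 : G.dist u a = G.dist a u := dist_comm
      have e4 : G.dist a u = 0 := by omega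
      exact hua ((hconn.dist_eq_zero_iff.mp e4).symm)
  -- part 1
  have part1 : ({v : V | G.dist v a ≤ α} ∩ {v : V | G.dist v b ≤ β}
      ⊆ {v : V | sInf ((fun u => G.dist v u) '' Set.range γ) ≤ α ∧ G.dist v b ≤ β}) := by
    rintro v ⟨h1, h2⟩
    exact ⟨le_trans (hInf_le v a ha) h1, h2⟩
  refine ⟨part1, ?_, ?_⟩
  · -- part 2
    intro hβα
    have hβα' : β ≤ δ + α := by omega
    ext v
    constructor
    · rintro ⟨h1, h2⟩
      refine ⟨?_, h2⟩
      obtain ⟨u, huA, hval, hmin⟩ := hmin_ex v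
      rw [← hval] at h1
      by_cases hua : u = a
      · subst hua; exact h1
      · have hk := key v u huA hmin hua
        have hub : G.dist u b = G.dist b u := dist_comm
        have e2 := hgb u huA
        have tri : G.dist v a ≤ G.dist v u + G.dist u a := hconn.dist_triangle
        have e3 : G.dist u a = G.dist a u := dist_comm
        simp only [Set.mem_setOf_eq]
        omega
    · exact fun hv => part1 hv
  · -- part 3
    intro hlt
    have hβ : δ + α + 1 ≤ β := by omega
    obtain ⟨n₀, hn₀⟩ := ha
    -- growing a branch off the apartment
    have grow : ∀ i : ℕ, ∃ v : V, G.dist v a = i + 1 ∧ ∀ t ∈ A, i + 1 ≤ G.dist v t := by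
      intro i
      induction i with
      | zero =>
        have hncard := hreg a
        have hsub : ¬ (G.neighborSet a ⊆ {γ (n₀ - 1), γ (n₀ + 1)}) := by
          intro hsub
          have hfin : ({γ (n₀ - 1), γ (n₀ + 1)} : Set V).Finite :=
            (Set.finite_singleton _).insert _
          have h2 := Set.ncard_le_ncard hsub hfin
          have h3 : ({γ (n₀ - 1), γ (n₀ + 1)} : Set V).ncard ≤ 2 := by
            refine le_trans (Set.ncard_insert_le _ _) ?_
            simp [Set.ncard_singleton]
          omega
        obtain ⟨w, hwN, hwxy⟩ : ∃ w ∈ G.neighborSet a, w ∉ ({γ (n₀ - 1), γ (n₀ + 1)} : Set V) := by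
          by_contra h
          push_neg at h
          exact hsub h
        have hwa : G.dist w a = 1 := dist_eq_one_iff_adj.mpr (hwN : G.Adj a w).symm
        refine ⟨w, hwa, ?_⟩
        rintro t ⟨k, rfl⟩
        by_contra hle
        push_neg at hle
        have h0 : G.dist w (γ k) = 0 := by omega
        have hwk : w = γ k := hconn.dist_eq_zero_iff.mp h0
        subst hwk
        have := hgeo k n₀
        rw [hn₀, hwa] at this
        have : k = n₀ - 1 ∨ k = n₀ + 1 := by omega
        rcases this with rfl | rfl
        · exact hwxy (Or.inl rfl)
        · exact hwxy (Or.inr rfl)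
      | succ i ih =>
        obtain ⟨v, hva, hvmin⟩ := ih
        -- gate of v is a
        have hvg : ∀ t ∈ A, G.dist v t = (i + 1) + G.dist a t := by
          obtain ⟨u', hu'A, hval', hmin'⟩ := hmin_ex v
          have h1 : G.dist v u' ≤ i + 1 := hva ▸ hmin' a ⟨n₀, hn₀⟩
          have h2 : i + 1 ≤ G.dist v u' := hvmin u' hu'A
          have hg := tree_gate γ hG hadj hu'A hmin'
          have hga := hg a ⟨n₀, hn₀⟩
          have hu'a : G.dist u' a = 0 := by omega
          have : u' = a := hconn.dist_eq_zero_iff.mp hu'a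
          subst this
          intro t ht
          rw [hg t ht]
          omega
        -- the neighbour of v towards a
        obtain ⟨pva, hpva, -⟩ := hG.existsUnique_path v a
        have hlen : pva.length = i + 1 := (tree_path_length_eq_dist hG hpva).trans hva
        cases pva with
        | nil => simp at hlen
        | @cons _ w₀ _ hvw₀ qpath =>
          have hq' : qpath.IsPath := hpva.of_cons
          have hw₀a : G.dist w₀ a = i := by
            have := tree_path_length_eq_dist hG hq'
            rw [Walk.length_cons] at hlen
            omega
          -- pick a neighbour different from w₀
          obtain ⟨w, hwN, hww₀⟩ : ∃ w ∈ G.neighborSet v, w ≠ w₀ := by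
            by_contra h
            push_neg at h
            have hsub : G.neighborSet v ⊆ {w₀} := fun x hx => h x hx
            have h2 := Set.ncard_le_ncard hsub (Set.finite_singleton _)
            rw [Set.ncard_singleton, hreg v] at h2
            omega
          have hvw : G.Adj v w := hwN
          have hdvw : G.dist v w = 1 := dist_eq_one_iff_adj.mpr hvw
          have hdwv : G.dist w v = 1 := dist_eq_one_iff_adj.mpr hvw.symm
          -- Claim A : d(w,a) = i+2
          have claimA : G.dist w a = i + 2 := by
            have tri1 : G.dist w a ≤ G.dist w v + G.dist v a := hconn.dist_triangle
            have tri2 : G.dist v a ≤ G.dist v w + G.dist w a := hconn.dist_triangle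
            have hcases : G.dist w a = i ∨ G.dist w a = i + 1 ∨ G.dist w a = i + 2 := by omega
            rcases hcases with hcase | hcase | hcase
            · exfalso
              apply hww₀
              refine tree_toward_eq hG (y := a) hvw hvw₀ (by omega) (by omega)
            · exfalso
              obtain ⟨pwa, hpwa, -⟩ := hG.existsUnique_path w a
              have hvns : v ∉ pwa.support := by
                intro hv
                have := tree_dist_split hG hpwa hv
                omega
              have hcons : (Walk.cons hvw pwa).IsPath := hpwa.cons hvns
              have := tree_path_length_eq_dist hG hcons
              rw [Walk.length_cons, tree_path_length_eq_dist hG hpwa] at this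
              omega
            · exact hcase
          -- Claim B : d(w,A) = i+2
          refine ⟨w, claimA, ?_⟩
          intro t htA
          by_contra hle
          push_neg at hle
          obtain ⟨u, huA, hval, hmin⟩ := hmin_ex w
          have hwu_le : G.dist w u ≤ i + 1 := by
            have := hmin t htA
            omega
          have hg := tree_gate γ hG hadj huA hmin
          have hga : G.dist w a = G.dist w u + G.dist u a := hg a ⟨n₀, hn₀⟩
          have hau : G.dist a u = G.dist u a := dist_comm
          have hvgu := hvg u huA
          have triv : G.dist v u ≤ G.dist v w + G.dist w u := hconn.dist_triangle
          have hau1 : G.dist a u = 1 := by omega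
          have hwu : G.dist w u = i + 1 := by omega
          have hvu : G.dist v u = i + 2 := by omega
          -- w₀ is also towards u
          have hw₀u_le : G.dist w₀ u ≤ i + 1 := by
            have : G.dist w₀ u ≤ G.dist w₀ a + G.dist a u := hconn.dist_triangle
            omega
          have hw₀u_ge : G.dist v u ≤ G.dist v w₀ + G.dist w₀ u := hconn.dist_triangle
          have hvw₀d : G.dist v w₀ = 1 := dist_eq_one_iff_adj.mpr hvw₀
          have hw₀u : G.dist w₀ u + 1 = G.dist v u := by omega
          exact hww₀ (tree_toward_eq hG hvw hvw₀ (by omega) hw₀u)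
    -- strictness witnesses
    have hmem_a : a ∈ A := ⟨n₀, hn₀⟩
    constructor
    · -- B_α(a) ⊊ S
      rw [Set.ssubset_def]
      constructor
      · intro v hv
        have hv' : G.dist v a ≤ α := hv
        have tri : G.dist v b ≤ G.dist v a + G.dist a b := hconn.dist_triangle
        exact ⟨le_trans (hInf_le v a hmem_a) hv', by omega⟩
      · intro hcontra
        set v₁ := γ (n₀ + (α : ℤ) + 1) with hv₁
        have hv₁a : G.dist v₁ a = α + 1 := by
          rw [← hn₀, hgeo]
          omega
        have hv₁S : v₁ ∈ {v : V | sInf ((fun u => G.dist v u) '' A) ≤ α ∧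
            G.dist v b ≤ β} := by
          constructor
          · have h0 : G.dist v₁ v₁ = 0 := SimpleGraph.dist_self
            have hle := hInf_le v₁ v₁ ⟨n₀ + (α : ℤ) + 1, rfl⟩
            rw [h0] at hle
            exact le_trans hle (Nat.zero_le α)
          · have tri : G.dist v₁ b ≤ G.dist v₁ a + G.dist a b := hconn.dist_triangle
            omega
        have := hcontra hv₁S
        have : G.dist v₁ a ≤ α := this
        omega
    · -- S ⊊ B_β(b)
      rw [Set.ssubset_def]
      constructor
      · rintro v ⟨-, h2⟩
        exact h2
      · intro hcontra
        obtain ⟨v₂, hv₂a, hv₂min⟩ := grow α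
        have hv₂b : G.dist v₂ b ≤ β := by
          have tri : G.dist v₂ b ≤ G.dist v₂ a + G.dist a b := hconn.dist_triangle
          omega
        have := hcontra hv₂b
        obtain ⟨hS1, -⟩ := this
        obtain ⟨u, huA, hval⟩ := Nat.sInf_mem (hDne v₂)
        have hval' : G.dist v₂ u = sInf ((fun u => G.dist v₂ u) '' A) := hval
        have := hv₂min u huA
        omega
end

section
/- Let q ≥ 2 be an integer and X an infinite (q+1)-regular tree equipped with a proper 2-coloring of its vertices by black and white (adjacent vertices receive different colors). Let S be a finite nonempty set of vertices whose induced subgraph is connected, with B black vertices and W white vertices. Then for every integer n ≥ 1, the number of black vertices at distance exactly n from S equals q^{n−1}·(q·B − W + 1) if n is even, and q^{n−1}·(q·W − B + 1) if n is odd. -/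
namespace Stmt10
open SimpleGraph Set

variable {V : Type*} {G : SimpleGraph V}

/-- In a tree, every path realizes the distance. -/
lemma path_length_eq (hG : G.IsTree) {u v : V} (p : G.Walk u v) (hp : p.IsPath) :
    p.length = G.dist u v := by
  obtain ⟨p₀, hp₀, hl⟩ := hG.isConnected.exists_path_of_dist u v
  rw [(hG.existsUnique_path u v).unique hp hp₀, hl]

lemma walk_parity (c : V → Bool) (hc : ∀ u v : V, G.Adj u v → c u ≠ c v)
    {u v : V} (p : G.Walk u v) : (c u = c v ↔ Even p.length) := by
  induction p with
  | nil => simp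
  | @cons a b w h q ih =>
    have hab := hc _ _ h
    rw [Walk.length_cons, Nat.even_add_one, ← ih]
    cases hb : c a <;> cases hb2 : c b <;> cases hb3 : c w <;> simp_all

lemma bool_eq_of_iff {x y z : Bool} (h : (x = z) ↔ (y = z)) : x = y := by
  cases x <;> cases y <;> cases z <;> simp_all

lemma bool_opp {x y b : Bool} (hxy : x ≠ y) (hx : ¬ (x = !b)) : y = !b := by
  cases x <;> cases y <;> cases b <;> simp_all

lemma bool_not_eq {x b : Bool} (h : x ≠ b) : x = !b := by
  cases x <;> cases b <;> simp_all

lemma dist_parity (hconn : G.Connected) (c : V → Bool)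
    (hc : ∀ u v : V, G.Adj u v → c u ≠ c v) (u v : V) :
    (c u = c v ↔ Even (G.dist u v)) := by
  obtain ⟨p, hp, hl⟩ := hconn.exists_path_of_dist u v
  rw [← hl]; exact walk_parity c hc p

/-- betweenness: if distances add up, `v` lies on the (unique) path. -/
lemma mem_support_of_dist (hG : G.IsTree) {u v w : V} (p : G.Walk u w) (hp : p.IsPath)
    (h : G.dist u v + G.dist v w = G.dist u w) : v ∈ p.support := by
  obtain ⟨p₁, hp₁, hl₁⟩ := hG.isConnected.exists_path_of_dist u v
  obtain ⟨p₂, hp₂, hl₂⟩ := hG.isConnected.exists_path_of_dist v w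
  have hlen : (p₁.append p₂).length = G.dist u w := by
    rw [Walk.length_append, hl₁, hl₂, h]
  have hpath := (p₁.append p₂).isPath_of_length_eq_dist hlen
  rw [(hG.existsUnique_path u w).unique hp hpath]
  rw [Walk.mem_support_append_iff]
  exact Or.inl p₁.end_mem_support

lemma dist_add_of_mem_support [DecidableEq V] (hG : G.IsTree) {u w x : V} (p : G.Walk u w) (hp : p.IsPath)
    (hx : x ∈ p.support) : G.dist u x + G.dist x w = G.dist u w := by
  have h1 := path_length_eq hG _ (hp.takeUntil hx)
  have h2 := path_length_eq hG _ (hp.dropUntil hx)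
  have h3 := congrArg Walk.length (Walk.take_spec p hx)
  rw [Walk.length_append, h1, h2] at h3
  rw [h3, path_length_eq hG p hp]

lemma support_split [DecidableEq V] {u w x y : V} (p : G.Walk u w)
    (hx : x ∈ p.support) (hy : y ∈ p.support) :
    y ∈ (p.takeUntil x hx).support ∨ y ∈ (p.dropUntil x hx).support := by
  conv at hy => rw [← Walk.take_spec p hx]
  rw [Walk.mem_support_append_iff] at hy
  exact hy


noncomputable def lev (G : SimpleGraph V) (S : Set V) (w : V) : ℕ :=
  sInf ((fun s => G.dist w s) '' S)

variable {S : Set V}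

lemma lev_le (ht : t ∈ S) (w : V) : lev G S w ≤ G.dist w t :=
  Nat.sInf_le ⟨t, ht, rfl⟩

lemma exists_lev (hSne : S.Nonempty) (w : V) : ∃ s ∈ S, G.dist w s = lev G S w := by
  have := Nat.sInf_mem (hSne.image (fun s => G.dist w s))
  obtain ⟨s, hs, hds⟩ := this
  exact ⟨s, hs, hds⟩

lemma lev_eq_zero_iff (hconn : G.Connected) (hSne : S.Nonempty) {w : V} :
    lev G S w = 0 ↔ w ∈ S := by
  constructor
  · intro h
    obtain ⟨s, hs, hds⟩ := exists_lev hSne w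
    rw [h] at hds
    rwa [hconn.dist_eq_zero_iff.mp hds]
  · intro h
    have h2 := lev_le (G := G) h w
    rw [SimpleGraph.dist_self] at h2
    omega

lemma lev_adj_le (hconn : G.Connected) (hSne : S.Nonempty) {u w : V} (h : G.Adj u w) :
    lev G S w ≤ lev G S u + 1 := by
  obtain ⟨s, hs, hds⟩ := exists_lev hSne u
  calc lev G S w ≤ G.dist w s := lev_le hs w
    _ ≤ G.dist w u + G.dist u s := hconn.dist_triangle
    _ = lev G S u + 1 := by
        rw [hds, dist_eq_one_iff_adj.mpr h.symm]; omega

/-- the unique path between two vertices of `S` stays inside `S`. -/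
lemma path_subset (hG : G.IsTree) (hconn : (G.induce S).Connected) {x r : V}
    (hx : x ∈ S) (hr : r ∈ S) (p : G.Walk x r) (hp : p.IsPath) :
    ∀ y ∈ p.support, y ∈ S := by
  classical
  obtain ⟨w⟩ := hconn (⟨x, hx⟩ : S) ⟨r, hr⟩
  let w' := w.toPath
  set e := SimpleGraph.Embedding.induce (G := G) S with he
  have hinj : Function.Injective e.toHom := e.injective
  have hmapped : ((w'.1 : (G.induce S).Walk _ _).map e.toHom).IsPath :=
    Walk.map_isPath_of_injective hinj w'.2
  have := (hG.existsUnique_path x r).unique hp hmapped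
  rw [this]
  intro y hy
  have hy : y ∈ ((w'.1 : (G.induce S).Walk _ _).map e.toHom).support := hy
  rw [Walk.support_map] at hy
  obtain ⟨z, _, rfl⟩ := List.mem_map.mp hy
  exact z.2


lemma exists_parent (hG : G.IsTree) (hSne : S.Nonempty) {w : V} {n : ℕ}
    (hw : lev G S w = n + 1) : ∃ u : V, G.Adj w u ∧ lev G S u = n := by
  obtain ⟨s, hs, hds⟩ := exists_lev (G := G) hSne w
  obtain ⟨p, hp, hl⟩ := hG.isConnected.exists_path_of_dist w s
  rw [hds, hw] at hl
  cases p with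
  | nil => simp at hl
  | @cons _ u _ h q =>
    have hqp : q.IsPath := hp.of_cons
    have hql : q.length = n := by simpa using hl
    have hdus : G.dist u s = n := by rw [← path_length_eq hG q hqp, hql]
    have h1 : lev G S u ≤ n := hdus ▸ lev_le hs u
    have h2 := lev_adj_le (G := G) (S := S) hG.isConnected hSne h.symm
    exact ⟨u, h, by omega⟩

lemma gate (hG : G.IsTree) (c : V → Bool) (hc : ∀ u v : V, G.Adj u v → c u ≠ c v)
    (hSne : S.Nonempty) (hconnS : (G.induce S).Connected) :
    ∀ n (w : V), lev G S w = n → ∃ g ∈ S, ∀ t ∈ S, G.dist w t = n + G.dist g t := by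
  classical
  intro n
  induction n with
  | zero =>
    intro w hw
    refine ⟨w, (lev_eq_zero_iff hG.isConnected hSne).mp hw, fun t ht => by simp⟩
  | succ n ih =>
    intro w hw
    obtain ⟨u, hadj, hlevu⟩ := exists_parent hG hSne hw
    obtain ⟨g, hg, hgate⟩ := ih u hlevu
    refine ⟨g, hg, fun t ht => ?_⟩
    have hut : G.dist u t = n + G.dist g t := hgate t ht
    have hdwu : G.dist w u = 1 := dist_eq_one_iff_adj.mpr hadj
    have htri1 : G.dist w t ≤ G.dist w u + G.dist u t := hG.isConnected.dist_triangle
    have htri2 : G.dist u t ≤ G.dist u w + G.dist w t := hG.isConnected.dist_triangle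
    have hduw : G.dist u w = 1 := dist_eq_one_iff_adj.mpr hadj.symm
    -- parity
    have hp1 := dist_parity hG.isConnected c hc w t
    have hp2 := dist_parity hG.isConnected c hc u t
    have hcwu := hc _ _ hadj
    have hne : G.dist w t ≠ G.dist u t := by
      intro hEq
      apply hcwu
      have h12 : (c w = c t) ↔ (c u = c t) := by rw [hp1, hp2, hEq]
      cases hb1 : c w <;> cases hb2 : c u <;> cases hb3 : c t <;> simp_all
    have hlevw_le : lev G S w ≤ G.dist w t := lev_le ht w
    -- rule out dist u t = dist w t + 1
    have hne2 : G.dist u t ≠ G.dist w t + 1 := by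
      intro hEq
      obtain ⟨pt, hpt, hptl⟩ := hG.isConnected.exists_path_of_dist u t
      have hwmem : w ∈ pt.support :=
        mem_support_of_dist hG pt hpt (by omega)
      cases n with
      | zero =>
        -- u ∈ S; path from u to t stays in S; so w ∈ S, contradiction
        have huS : u ∈ S := (lev_eq_zero_iff hG.isConnected hSne).mp hlevu
        have : w ∈ S := path_subset hG hconnS huS ht pt hpt w hwmem
        have : lev G S w = 0 := (lev_eq_zero_iff hG.isConnected hSne).mpr this
        omega
      | succ m =>
        have hdug : G.dist u g = m + 1 := by
          have := hgate g hg
          simpa [SimpleGraph.dist_self] using this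
        have hgmem : g ∈ pt.support :=
          mem_support_of_dist hG pt hpt (by omega)
        rcases support_split pt hwmem hgmem with hcase | hcase
        · have h4 := dist_add_of_mem_support hG _ (hpt.takeUntil hwmem) hcase
          have hgw : G.dist g w = 0 := by omega
          have hgweq : g = w := hG.isConnected.dist_eq_zero_iff.mp hgw
          have hwS : w ∈ S := hgweq ▸ hg
          have : lev G S w = 0 := (lev_eq_zero_iff hG.isConnected hSne).mpr hwS
          omega
        · have h5 := dist_add_of_mem_support hG _ (hpt.dropUntil hwmem) hcase
          have hlevg := lev_le (G := G) hg w
          omega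
    omega


lemma gate' (hG : G.IsTree) (c : V → Bool) (hc : ∀ u v : V, G.Adj u v → c u ≠ c v)
    (hSne : S.Nonempty) (hconnS : (G.induce S).Connected) (w : V) :
    ∃ g ∈ S, G.dist w g = lev G S w ∧ ∀ t ∈ S, G.dist w t = lev G S w + G.dist g t := by
  obtain ⟨g, hg, hgate⟩ := gate hG c hc hSne hconnS (lev G S w) w rfl
  exact ⟨g, hg, by simpa [SimpleGraph.dist_self] using hgate g hg, hgate⟩

lemma parent_unique (hG : G.IsTree) (c : V → Bool) (hc : ∀ u v : V, G.Adj u v → c u ≠ c v)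
    (hSne : S.Nonempty) (hconnS : (G.induce S).Connected)
    {w u₁ u₂ : V} {n : ℕ} (hw : lev G S w = n + 1)
    (h1 : G.Adj w u₁) (hl1 : lev G S u₁ = n)
    (h2 : G.Adj w u₂) (hl2 : lev G S u₂ = n) : u₁ = u₂ := by
  obtain ⟨g, hg, hgate⟩ := gate hG c hc hSne hconnS _ w hw
  obtain ⟨p₀, hp₀, hp₀l⟩ := hG.isConnected.exists_path_of_dist w g
  suffices H : ∀ u, G.Adj w u → lev G S u = n → u = p₀.getVert 1 by
    rw [H u₁ h1 hl1, H u₂ h2 hl2]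
  intro u hadj hlev
  obtain ⟨h, hh, hgateu⟩ := gate hG c hc hSne hconnS _ u hlev
  have e1 : G.dist w h = (n+1) + G.dist g h := hgate h hh
  have e2 : G.dist u h = n := by simpa [SimpleGraph.dist_self] using hgateu h hh
  have e3 : G.dist w h ≤ G.dist w u + G.dist u h := hG.isConnected.dist_triangle
  have e4 : G.dist w u = 1 := dist_eq_one_iff_adj.mpr hadj
  have e5 : G.dist g h = 0 := by omega
  have e6 : g = h := hG.isConnected.dist_eq_zero_iff.mp e5
  have e7 : G.dist u g = n := by rw [e6]; exact e2
  have e8 : G.dist w g = n + 1 := by simpa [SimpleGraph.dist_self] using hgate g hg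
  obtain ⟨pu, hpu, hpul⟩ := hG.isConnected.exists_path_of_dist u g
  have hW : (Walk.cons hadj pu).length = G.dist w g := by
    simp [Walk.length_cons, hpul, e7, e8]
  have hWp := (Walk.cons hadj pu).isPath_of_length_eq_dist hW
  have hWeq := (hG.existsUnique_path w g).unique hWp hp₀
  rw [← hWeq, Walk.getVert_cons pu hadj one_ne_zero, Nat.sub_self, Walk.getVert_zero]

lemma lev_adj_ne (hG : G.IsTree) (c : V → Bool) (hc : ∀ u v : V, G.Adj u v → c u ≠ c v)
    (hSne : S.Nonempty) (hconnS : (G.induce S).Connected)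
    {v w : V} (hvw : G.Adj v w)
    (h1 : 1 ≤ lev G S v) (heq : lev G S v = lev G S w) : False := by
  classical
  set m := lev G S v with hm
  obtain ⟨g, hg, hdwg, hgw⟩ := gate' hG c hc hSne hconnS w
  obtain ⟨h, hh, hdvh, hgv⟩ := gate' hG c hc hSne hconnS v
  rw [← heq] at hgw hdwg
  have e1 : G.dist w h = m + G.dist g h := hgw h hh
  have e2 : G.dist w v = 1 := dist_eq_one_iff_adj.mpr hvw.symm
  have e3 : G.dist w h ≤ G.dist w v + G.dist v h := hG.isConnected.dist_triangle
  have e4 : G.dist g h ≤ 1 := by omega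
  have e5 : G.dist w g = m := hdwg
  have e6 : G.dist v g = m + G.dist h g := hgv g hg
  interval_cases hgh : G.dist g h
  · -- g = h, parity contradiction
    have e7 : g = h := hG.isConnected.dist_eq_zero_iff.mp hgh
    have e8 : G.dist v g = m := by
      rw [e6, e7, SimpleGraph.dist_self]
      omega
    have p1 := dist_parity hG.isConnected c hc v g
    have p2 := dist_parity hG.isConnected c hc w g
    rw [e8] at p1
    rw [e5] at p2
    have hcc := hc _ _ hvw
    apply hcc
    have h12 : (c v = c g) ↔ (c w = c g) := by rw [p1, p2]
    cases hb1 : c v <;> cases hb2 : c w <;> cases hb3 : c g <;> simp_all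
  · -- dist g h = 1
    have e7 : G.dist w h = m + 1 := by omega
    obtain ⟨pt, hpt, hptl⟩ := hG.isConnected.exists_path_of_dist w h
    have hvmem : v ∈ pt.support :=
      mem_support_of_dist hG pt hpt (by omega)
    have hgmem : g ∈ pt.support :=
      mem_support_of_dist hG pt hpt (by omega)
    rcases support_split pt hvmem hgmem with hcase | hcase
    · have h4 := dist_add_of_mem_support hG _ (hpt.takeUntil hvmem) hcase
      rw [e2] at h4
      have hgv0 : G.dist g v = 0 := by omega
      have : g = v := hG.isConnected.dist_eq_zero_iff.mp hgv0
      have hvS : v ∈ S := this ▸ hg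
      have : lev G S v = 0 := (lev_eq_zero_iff hG.isConnected hSne).mpr hvS
      omega
    · have h5 := dist_add_of_mem_support hG _ (hpt.dropUntil hvmem) hcase
      rw [hdvh] at h5
      have hlevg := lev_le (G := G) hg v
      have e9 : G.dist h g = G.dist g h := SimpleGraph.dist_comm ..
      omega

lemma neighborSet_finite (hreg : ∀ v : V, (G.neighborSet v).ncard = q + 1) (v : V) :
    (G.neighborSet v).Finite := by
  by_contra h
  have h0 : (G.neighborSet v).ncard = 0 := Set.Infinite.ncard h
  rw [hreg v] at h0
  omega

lemma lev_finite (hG : G.IsTree) (hSne : S.Nonempty) (hSfin : S.Finite)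
    (hreg : ∀ v : V, (G.neighborSet v).ncard = q + 1) :
    ∀ n, {w | lev G S w = n}.Finite := by
  intro n
  induction n with
  | zero =>
    have : {w | lev G S w = 0} = S := by
      ext w; exact lev_eq_zero_iff hG.isConnected hSne
    rw [this]; exact hSfin
  | succ n ih =>
    have hsub : {w | lev G S w = n+1} ⊆ ⋃ u ∈ {w | lev G S w = n}, G.neighborSet u := by
      intro w hw
      obtain ⟨u, hadj, hlev⟩ := exists_parent hG hSne hw
      exact Set.mem_biUnion hlev hadj.symm
    exact ((ih.biUnion (fun u _ => neighborSet_finite hreg u)).subset hsub)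


/-- level recurrence: `#(level (n+1), colour b) = q * #(level n, colour !b)` for `n ≥ 1`. -/
lemma count_step (hG : G.IsTree) (c : V → Bool) (hc : ∀ u v : V, G.Adj u v → c u ≠ c v)
    (hSne : S.Nonempty) (hSfin : S.Finite) (hconnS : (G.induce S).Connected)
    (hreg : ∀ v : V, (G.neighborSet v).ncard = q + 1)
    {n : ℕ} (hn : 1 ≤ n) (b : Bool) :
    {w | c w = b ∧ lev G S w = n + 1}.ncard
      = q * {u | c u = !b ∧ lev G S u = n}.ncard := by
  classical
  -- parent function
  have hpar : ∀ x : V, ∃ u : V, lev G S x ≠ 0 → (G.Adj x u ∧ lev G S u + 1 = lev G S x) := by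
    intro x
    by_cases hx : lev G S x = 0
    · exact ⟨x, fun h => absurd hx h⟩
    · obtain ⟨k, hk⟩ := Nat.exists_eq_succ_of_ne_zero hx
      obtain ⟨u, hadj, hlev⟩ := exists_parent hG hSne hk
      exact ⟨u, fun _ => ⟨hadj, by omega⟩⟩
  choose pa hpa using hpar
  have hTfin : {w | c w = b ∧ lev G S w = n + 1}.Finite :=
    (lev_finite hG hSne hSfin hreg (n+1)).subset (fun w hw => hw.2)
  have hUfin : {u | c u = !b ∧ lev G S u = n}.Finite :=
    (lev_finite hG hSne hSfin hreg n).subset (fun w hw => hw.2)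
  set T := hTfin.toFinset with hT
  set U := hUfin.toFinset with hU
  have hmaps : ∀ w ∈ T, pa w ∈ U := by
    intro w hw
    rw [hT, Set.Finite.mem_toFinset] at hw
    obtain ⟨hcw, hlw⟩ := hw
    obtain ⟨hpadj, hplev⟩ := hpa w (by omega)
    rw [hU, Set.Finite.mem_toFinset]
    refine ⟨?_, by omega⟩
    have := hc _ _ hpadj
    rw [hcw] at this
    cases hbb : c (pa w) <;> cases b <;> simp_all
  have hcard := Finset.card_eq_sum_card_fiberwise hmaps
  -- each fiber has size q
  have hfiber : ∀ u ∈ U, (T.filter (fun x => pa x = u)).card = q := by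
    intro u hu
    rw [hU, Set.Finite.mem_toFinset] at hu
    obtain ⟨hcu, hlu⟩ := hu
    obtain ⟨hupadj, huplev⟩ := hpa u (by omega)
    have hsetEq : ((T.filter (fun x => pa x = u)) : Set V)
        = G.neighborSet u \ {pa u} := by
      ext w
      simp only [Finset.coe_filter, Set.mem_setOf_eq, Set.mem_diff, Set.mem_singleton_iff,
        SimpleGraph.mem_neighborSet, hT, Set.Finite.mem_toFinset]
      constructor
      · rintro ⟨⟨hcw, hlw⟩, hpw⟩
        obtain ⟨hwadj, hwlev⟩ := hpa w (by omega)
        rw [hpw] at hwadj hwlev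
        refine ⟨hwadj.symm, ?_⟩
        intro hEq
        rw [hEq] at hlw
        omega
      · rintro ⟨hadj, hne⟩
        have h1 : lev G S w ≤ lev G S u + 1 := lev_adj_le hG.isConnected hSne hadj
        have h2 : lev G S u ≤ lev G S w + 1 := lev_adj_le hG.isConnected hSne hadj.symm
        have h3 : lev G S w ≠ lev G S u := by
          intro hEq
          exact lev_adj_ne hG c hc hSne hconnS hadj.symm (by omega) (by omega)
        have h4 : lev G S w = n + 1 := by
          rcases Nat.lt_or_ge (lev G S w) (lev G S u) with h | h
          · exfalso
            apply hne
            have hw' : lev G S u = lev G S w + 1 := by omega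
            exact parent_unique hG c hc hSne hconnS hw' hadj rfl hupadj (by omega)
          · omega
        have hcolw : c w = b := by
          have := hc _ _ hadj
          rw [hcu] at this
          cases hbw : c w <;> cases b <;> simp_all
        obtain ⟨hwadj, hwlev⟩ := hpa w (by omega)
        have hpaw : pa w = u :=
          parent_unique hG c hc hSne hconnS h4 hwadj (by omega) hadj.symm hlu
        exact ⟨⟨hcolw, h4⟩, hpaw⟩
    have hcoe : (T.filter (fun x => pa x = u)).card
        = (G.neighborSet u \ {pa u}).ncard := by
      rw [← hsetEq, Set.ncard_coe_finset]
    rw [hcoe]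
    have hmem : pa u ∈ G.neighborSet u := hupadj
    have hNfin : (G.neighborSet u).Finite := neighborSet_finite hreg u
    have := Set.ncard_diff_singleton_add_one hmem hNfin
    rw [hreg u] at this
    omega
  rw [Finset.sum_congr rfl hfiber, Finset.sum_const, smul_eq_mul] at hcard
  rw [Set.ncard_eq_toFinset_card _ hTfin, Set.ncard_eq_toFinset_card _ hUfin]
  rw [← hT, ← hU, hcard, Nat.mul_comm]


lemma lev_singleton (r x : V) : lev G {r} x = G.dist x r := by
  simp only [lev, Set.image_singleton, csInf_singleton]

lemma induce_singleton_connected (G : SimpleGraph V) (r : V) :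
    (G.induce {r}).Connected := by
  rw [SimpleGraph.induce_singleton_eq_top]
  have : Nonempty ({r} : Set V) := ⟨⟨r, rfl⟩⟩
  exact SimpleGraph.connected_top

/-- the number of edges inside `S` with prescribed colour on the first coordinate is
`S.ncard - 1`. -/
lemma edge_count (hG : G.IsTree) (c : V → Bool) (hc : ∀ u v : V, G.Adj u v → c u ≠ c v)
    (hSne : S.Nonempty) (hSfin : S.Finite) (hconnS : (G.induce S).Connected) (b : Bool)
    (hUfin : (S ∩ {v | c v = !b}).Finite) :
    (∑ s ∈ hUfin.toFinset, (G.neighborSet s ∩ S).ncard) + 1 = S.ncard := by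
  classical
  obtain ⟨r, hr⟩ := hSne
  have hrne : ({r} : Set V).Nonempty := ⟨r, rfl⟩
  have hconn1 : (G.induce ({r} : Set V)).Connected := induce_singleton_connected G r
  -- parent step towards r
  have hpar : ∀ x : V, ∃ u : V,
      x ≠ r → (G.Adj x u ∧ G.dist u r + 1 = G.dist x r ∧ (x ∈ S → u ∈ S)) := by
    intro x
    by_cases hx : x = r
    · exact ⟨x, fun h => absurd hx h⟩
    · have hd0 : G.dist x r ≠ 0 := by
        intro h0
        exact hx (hG.isConnected.dist_eq_zero_iff.mp h0)
      obtain ⟨k, hk⟩ := Nat.exists_eq_succ_of_ne_zero hd0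
      have hlevx : lev G {r} x = k + 1 := by rw [lev_singleton]; exact hk
      obtain ⟨u, hadj, hlev⟩ := exists_parent hG hrne hlevx
      rw [lev_singleton] at hlev
      refine ⟨u, fun _ => ⟨hadj, by omega, fun hxS => ?_⟩⟩
      obtain ⟨p, hp, hpl⟩ := hG.isConnected.exists_path_of_dist x r
      have hdxu : G.dist x u = 1 := dist_eq_one_iff_adj.mpr hadj
      have humem : u ∈ p.support :=
        mem_support_of_dist hG p hp (by omega)
      exact path_subset hG hconnS hxS hr p hp u humem
  choose par hpar using hpar
  -- parent is unique
  have huniq : ∀ x u₁ u₂ : V, G.Adj x u₁ → G.Adj x u₂ →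
      G.dist u₁ r + 1 = G.dist x r → G.dist u₂ r + 1 = G.dist x r → u₁ = u₂ := by
    intro x u₁ u₂ ha1 ha2 hd1 hd2
    have hx : lev G {r} x = G.dist u₁ r + 1 := by rw [lev_singleton]; omega
    exact parent_unique hG c hc hrne hconn1 hx ha1 (by rw [lev_singleton]) ha2
      (by rw [lev_singleton]; omega)
  set A : Finset (V × V) :=
    (hSfin.toFinset ×ˢ hSfin.toFinset).filter (fun p => G.Adj p.1 p.2 ∧ c p.1 = !b) with hA
  -- Step 1 : A.card is the sum of the degrees
  have hmaps : ∀ p ∈ A, p.1 ∈ hUfin.toFinset := by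
    intro p hp
    rw [hA, Finset.mem_filter, Finset.mem_product] at hp
    rw [Set.Finite.mem_toFinset]
    exact ⟨hSfin.mem_toFinset.mp hp.1.1, hp.2.2⟩
  have hstep1 := Finset.card_eq_sum_card_fiberwise hmaps
  have hdegfin : ∀ s : V, (G.neighborSet s ∩ S).Finite := fun s =>
    hSfin.inter_of_right _
  have hfib1 : ∀ s ∈ hUfin.toFinset,
      (A.filter (fun p => p.1 = s)).card = (G.neighborSet s ∩ S).ncard := by
    intro s hs
    rw [Set.Finite.mem_toFinset] at hs
    rw [Set.ncard_eq_toFinset_card _ (hdegfin s)]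
    apply Finset.card_bij (fun p _ => p.2)
    · intro p hp
      rw [Finset.mem_filter, hA, Finset.mem_filter, Finset.mem_product] at hp
      rw [Set.Finite.mem_toFinset]
      refine ⟨?_, hSfin.mem_toFinset.mp hp.1.1.2⟩
      have := hp.1.2.1
      rw [hp.2] at this
      exact this
    · intro p hp p' hp' hEq
      rw [Finset.mem_filter] at hp hp'
      exact Prod.ext (hp.2.trans hp'.2.symm) hEq
    · intro t ht
      rw [Set.Finite.mem_toFinset, Set.mem_inter_iff, SimpleGraph.mem_neighborSet] at ht
      refine ⟨(s, t), ?_, rfl⟩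
      rw [Finset.mem_filter, hA, Finset.mem_filter, Finset.mem_product]
      exact ⟨⟨⟨hSfin.mem_toFinset.mpr hs.1, hSfin.mem_toFinset.mpr ht.2⟩, ht.1, hs.2⟩, rfl⟩
  -- Step 2 : A.card = (S \ {r}).ncard
  have hDfin : (S \ {r}).Finite := hSfin.subset Set.diff_subset
  have hstep2 : hDfin.toFinset.card = A.card := by
    apply Finset.card_bij
      (fun x _ => if c x = !b then (x, par x) else (par x, x))
    · intro x hx
      rw [Set.Finite.mem_toFinset, Set.mem_diff, Set.mem_singleton_iff] at hx
      obtain ⟨hadj, hdist, hmemS⟩ := hpar x hx.2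
      have hparS : par x ∈ S := hmemS hx.1
      by_cases hcx : c x = !b
      · rw [if_pos hcx, hA, Finset.mem_filter, Finset.mem_product]
        exact ⟨⟨hSfin.mem_toFinset.mpr hx.1, hSfin.mem_toFinset.mpr hparS⟩, hadj, hcx⟩
      · rw [if_neg hcx, hA, Finset.mem_filter, Finset.mem_product]
        refine ⟨⟨hSfin.mem_toFinset.mpr hparS, hSfin.mem_toFinset.mpr hx.1⟩, hadj.symm, ?_⟩
        exact bool_opp (hc _ _ hadj) hcx
    · intro x hx y hy hEq
      rw [Set.Finite.mem_toFinset, Set.mem_diff, Set.mem_singleton_iff] at hx hy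
      obtain ⟨hadjx, hdistx, _⟩ := hpar x hx.2
      obtain ⟨hadjy, hdisty, _⟩ := hpar y hy.2
      by_cases hcx : c x = !b <;> by_cases hcy : c y = !b
      · rw [if_pos hcx, if_pos hcy] at hEq
        exact congrArg Prod.fst hEq
      · rw [if_pos hcx, if_neg hcy] at hEq
        exfalso
        have e1 : x = par y := congrArg Prod.fst hEq
        have e2 : par x = y := congrArg Prod.snd hEq
        rw [← e1] at hdisty
        rw [e2] at hdistx
        omega
      · rw [if_neg hcx, if_pos hcy] at hEq
        exfalso
        have e1 : par x = y := congrArg Prod.fst hEq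
        have e2 : x = par y := congrArg Prod.snd hEq
        rw [← e2] at hdisty
        rw [e1] at hdistx
        omega
      · rw [if_neg hcx, if_neg hcy] at hEq
        exact congrArg Prod.snd hEq
    · intro p hp
      rw [hA, Finset.mem_filter, Finset.mem_product] at hp
      obtain ⟨⟨hp1, hp2⟩, hadj, hcp1⟩ := hp
      rw [Set.Finite.mem_toFinset] at hp1 hp2
      set s := p.1
      set t := p.2
      have htri1 : G.dist s r ≤ G.dist s t + G.dist t r := hG.isConnected.dist_triangle
      have htri2 : G.dist t r ≤ G.dist t s + G.dist s r := hG.isConnected.dist_triangle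
      have hdst : G.dist s t = 1 := dist_eq_one_iff_adj.mpr hadj
      have hdts : G.dist t s = 1 := dist_eq_one_iff_adj.mpr hadj.symm
      have hnecol := hc _ _ hadj
      have hnedist : G.dist s r ≠ G.dist t r := by
        intro hEq
        apply hnecol
        have p1 := dist_parity hG.isConnected c hc s r
        have p2 := dist_parity hG.isConnected c hc t r
        rw [hEq] at p1
        have h12 : (c s = c r) ↔ (c t = c r) := by rw [p1, p2]
        exact bool_eq_of_iff h12
      rcases Nat.lt_or_ge (G.dist t r) (G.dist s r) with hlt | hge
      · -- t is the parent of s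
        have hsr : s ≠ r := by
          intro h
          rw [h, SimpleGraph.dist_self] at hlt
          omega
        obtain ⟨hadjs, hdists, _⟩ := hpar s hsr
        have hpareq : par s = t := huniq s (par s) t hadjs hadj hdists (by omega)
        refine ⟨s, ?_, ?_⟩
        · rw [Set.Finite.mem_toFinset, Set.mem_diff, Set.mem_singleton_iff]
          exact ⟨hp1, hsr⟩
        · rw [if_pos hcp1, hpareq]
      · -- s is the parent of t
        have hlt2 : G.dist s r < G.dist t r := by omega
        have htr : t ≠ r := by
          intro h
          rw [h, SimpleGraph.dist_self] at hlt2
          omega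
        obtain ⟨hadjt, hdistt, _⟩ := hpar t htr
        have hpareq : par t = s := huniq t (par t) s hadjt hadj.symm hdistt (by omega)
        have hct : ¬ (c t = !b) := by
          intro h
          apply hnecol
          rw [hcp1, h]
        refine ⟨t, ?_, ?_⟩
        · rw [Set.Finite.mem_toFinset, Set.mem_diff, Set.mem_singleton_iff]
          exact ⟨hp2, htr⟩
        · rw [if_neg hct, hpareq]
  -- put the two steps together
  have hD : hDfin.toFinset.card = S.ncard - 1 := by
    rw [← Set.ncard_eq_toFinset_card _ hDfin]
    exact Set.ncard_diff_singleton_of_mem hr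
  have hSpos : 1 ≤ S.ncard := (Set.ncard_pos hSfin).mpr ⟨r, hr⟩
  rw [Finset.sum_congr rfl (fun s hs => (hfib1 s hs).symm), ← hstep1, ← hstep2]
  omega


lemma S_partition (c : V → Bool) (hSfin : S.Finite) (b : Bool) :
    (S ∩ {v | c v = b}).ncard + (S ∩ {v | c v = !b}).ncard = S.ncard := by
  have hdisj : Disjoint (S ∩ {v | c v = b}) (S ∩ {v | c v = !b}) := by
    rw [Set.disjoint_left]
    rintro x ⟨_, h1⟩ ⟨_, h2⟩
    simp only [Set.mem_setOf_eq] at h1 h2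
    rw [h1] at h2
    cases b <;> exact absurd h2 (by decide)
  have hunion : (S ∩ {v | c v = b}) ∪ (S ∩ {v | c v = !b}) = S := by
    ext x
    simp only [Set.mem_union, Set.mem_inter_iff, Set.mem_setOf_eq]
    constructor
    · rintro (⟨h, _⟩ | ⟨h, _⟩) <;> exact h
    · intro hx
      by_cases hcb : c x = b
      · exact Or.inl ⟨hx, hcb⟩
      · exact Or.inr ⟨hx, bool_not_eq hcb⟩
  rw [← Set.ncard_union_eq hdisj (hSfin.inter_of_left _) (hSfin.inter_of_left _), hunion]

lemma count_base (hG : G.IsTree) (c : V → Bool) (hc : ∀ u v : V, G.Adj u v → c u ≠ c v)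
    (hSne : S.Nonempty) (hSfin : S.Finite) (hconnS : (G.induce S).Connected)
    (hreg : ∀ v : V, (G.neighborSet v).ncard = q + 1) (b : Bool) :
    ({w | c w = b ∧ lev G S w = 1}.ncard : ℤ)
      = q * ((S ∩ {v | c v = !b}).ncard : ℤ) - ((S ∩ {v | c v = b}).ncard : ℤ) + 1 := by
  classical
  have hpar : ∀ x : V, ∃ u : V, lev G S x ≠ 0 → (G.Adj x u ∧ lev G S u + 1 = lev G S x) := by
    intro x
    by_cases hx : lev G S x = 0
    · exact ⟨x, fun h => absurd hx h⟩
    · obtain ⟨k, hk⟩ := Nat.exists_eq_succ_of_ne_zero hx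
      obtain ⟨u, hadj, hlev⟩ := exists_parent hG hSne hk
      exact ⟨u, fun _ => ⟨hadj, by omega⟩⟩
  choose pa hpa using hpar
  have hTfin : {w | c w = b ∧ lev G S w = 1}.Finite :=
    (lev_finite hG hSne hSfin hreg 1).subset (fun w hw => hw.2)
  have hUfin : (S ∩ {v | c v = !b}).Finite := hSfin.inter_of_left _
  set T := hTfin.toFinset with hT
  set U := hUfin.toFinset with hU
  have hmaps : ∀ w ∈ T, pa w ∈ U := by
    intro w hw
    rw [hT, Set.Finite.mem_toFinset] at hw
    obtain ⟨hcw, hlw⟩ := hw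
    obtain ⟨hadj, hlev⟩ := hpa w (by omega)
    have hlev0 : lev G S (pa w) = 0 := by omega
    rw [hU, Set.Finite.mem_toFinset]
    refine ⟨(lev_eq_zero_iff hG.isConnected hSne).mp hlev0, ?_⟩
    have h1 : c (pa w) ≠ b := by
      intro h
      exact hc _ _ hadj (hcw.trans h.symm)
    exact bool_not_eq h1
  have hcard := Finset.card_eq_sum_card_fiberwise hmaps
  have hfiber : ∀ s ∈ U, (T.filter (fun x => pa x = s)).card
      + (G.neighborSet s ∩ S).ncard = q + 1 := by
    intro s hs
    rw [hU, Set.Finite.mem_toFinset] at hs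
    obtain ⟨hsS, hsc⟩ := hs
    have hlevs : lev G S s = 0 := (lev_eq_zero_iff hG.isConnected hSne).mpr hsS
    have hsetEq : ((T.filter (fun x => pa x = s)) : Set V) = G.neighborSet s \ S := by
      ext w
      simp only [Finset.coe_filter, Set.mem_setOf_eq, Set.mem_diff,
        SimpleGraph.mem_neighborSet, hT, Set.Finite.mem_toFinset]
      constructor
      · rintro ⟨⟨hcw, hlw⟩, hpw⟩
        obtain ⟨hadj, hlev⟩ := hpa w (by omega)
        rw [hpw] at hadj
        refine ⟨hadj.symm, fun hwS => ?_⟩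
        have h0 : lev G S w = 0 := (lev_eq_zero_iff hG.isConnected hSne).mpr hwS
        omega
      · rintro ⟨hadj, hwnS⟩
        have hlevle : lev G S w ≤ 1 := by
          have h1 := lev_le (G := G) hsS w
          rwa [dist_eq_one_iff_adj.mpr hadj.symm] at h1
        have hlevne : lev G S w ≠ 0 := fun h0 =>
          hwnS ((lev_eq_zero_iff hG.isConnected hSne).mp h0)
        have hlev1 : lev G S w = 1 := by omega
        obtain ⟨hadjp, hlevp⟩ := hpa w (by omega)
        have hps : pa w = s :=
          parent_unique hG c hc hSne hconnS hlev1 hadjp (by omega) hadj.symm hlevs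
        have hcw : c w = b := by
          have h1 : c w ≠ !b := by
            intro h
            exact hc _ _ hadj (hsc.trans h.symm)
          have h2 := bool_not_eq h1
          simpa using h2
        exact ⟨⟨hcw, hlev1⟩, hps⟩
    have hcoe : (T.filter (fun x => pa x = s)).card = (G.neighborSet s \ S).ncard := by
      rw [← hsetEq, Set.ncard_coe_finset]
    have hNfin : (G.neighborSet s).Finite := neighborSet_finite hreg s
    have hdiff : (G.neighborSet s \ S).ncard
        = (G.neighborSet s).ncard - (G.neighborSet s ∩ S).ncard := by
      rw [← Set.diff_self_inter]
      exact Set.ncard_diff Set.inter_subset_left (hNfin.inter_of_left _)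
    have hle : (G.neighborSet s ∩ S).ncard ≤ (G.neighborSet s).ncard :=
      Set.ncard_le_ncard Set.inter_subset_left hNfin
    rw [hcoe, hdiff, hreg s]
    rw [hreg s] at hle
    omega
  have hsum : T.card + ∑ s ∈ U, (G.neighborSet s ∩ S).ncard = (q+1) * U.card := by
    rw [hcard, ← Finset.sum_add_distrib, Finset.sum_congr rfl hfiber,
      Finset.sum_const, smul_eq_mul, mul_comm]
  have hedge := edge_count hG c hc ⟨_, (hSne.choose_spec : hSne.choose ∈ S)⟩ hSfin hconnS b hUfin
  have hpart := S_partition (S := S) c hSfin b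
  have hTcard : {w | c w = b ∧ lev G S w = 1}.ncard = T.card :=
    Set.ncard_eq_toFinset_card _ hTfin
  have hUcard : (S ∩ {v | c v = !b}).ncard = U.card :=
    Set.ncard_eq_toFinset_card _ hUfin
  rw [hTcard, hUcard]
  rw [hUcard] at hpart
  have h1 : (T.card : ℤ) + (∑ s ∈ U, (G.neighborSet s ∩ S).ncard : ℕ) = ((q:ℤ)+1) * U.card := by
    exact_mod_cast hsum
  have h2 : ((∑ s ∈ U, (G.neighborSet s ∩ S).ncard : ℕ) : ℤ) + 1 = (S.ncard : ℤ) := by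
    exact_mod_cast hedge
  have h3 : ((S ∩ {v | c v = b}).ncard : ℤ) + (U.card : ℤ) = (S.ncard : ℤ) := by
    exact_mod_cast hpart
  have h4 : ((q:ℤ)+1) * U.card = q * U.card + U.card := by ring
  linarith


lemma count_formula (hG : G.IsTree) (c : V → Bool) (hc : ∀ u v : V, G.Adj u v → c u ≠ c v)
    (hSne : S.Nonempty) (hSfin : S.Finite) (hconnS : (G.induce S).Connected)
    (hreg : ∀ v : V, (G.neighborSet v).ncard = q + 1) :
    ∀ n, 1 ≤ n → ∀ b : Bool,
    ({w | c w = b ∧ lev G S w = n}.ncard : ℤ)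
      = (q:ℤ)^(n-1) *
        (if Even n then
            (q:ℤ) * ((S ∩ {v | c v = b}).ncard : ℤ) - ((S ∩ {v | c v = !b}).ncard : ℤ) + 1
          else
            (q:ℤ) * ((S ∩ {v | c v = !b}).ncard : ℤ) - ((S ∩ {v | c v = b}).ncard : ℤ) + 1) := by
  intro n
  induction n with
  | zero => intro h; omega
  | succ n ih =>
    intro _ b
    by_cases hn1 : n = 0
    · subst hn1
      rw [if_neg (by decide)]
      simpa using count_base hG c hc hSne hSfin hconnS hreg b
    · have hn : 1 ≤ n := by omega
      have hstep := count_step hG c hc hSne hSfin hconnS hreg hn b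
      have ihb := ih hn (!b)
      simp only [Bool.not_not] at ihb
      have hstepZ : ({w | c w = b ∧ lev G S w = n+1}.ncard : ℤ)
          = q * ({u | c u = !b ∧ lev G S u = n}.ncard : ℤ) := by exact_mod_cast hstep
      rw [hstepZ, ihb]
      have hpow : (q:ℤ)^(n+1-1) = (q:ℤ)^(n-1) * q := by
        rw [← pow_succ]
        congr 1
        omega
      rw [hpow]
      rcases Nat.even_or_odd n with he | ho
      · rw [if_pos he, if_neg (by simp [Nat.even_add_one, he])]
        ring
      · rw [if_neg (Nat.not_even_iff_odd.mpr ho),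
          if_pos (by rw [Nat.even_add_one]; exact Nat.not_even_iff_odd.mpr ho)]
        ring

end Stmt10

/-- In an infinite (q+1)-regular tree with a proper 2-coloring `c : V → Bool`
(black = `true`, white = `false`), for a finite nonempty connected set `S` of
vertices with `B` black and `W` white vertices, the number of black vertices at
distance exactly `n ≥ 1` from `S` is `q^{n−1}·(q·B − W + 1)` if `n` is even and
`q^{n−1}·(q·W − B + 1)` if `n` is odd. -/
theorem stmt_10 {V : Type*} (G : SimpleGraph V) (hG : G.IsTree) [Infinite V]
    (q : ℕ) (hq : 2 ≤ q)
    (hreg : ∀ v : V, (G.neighborSet v).ncard = q + 1)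
    (c : V → Bool) (hc : ∀ u v : V, G.Adj u v → c u ≠ c v)
    (S : Set V) (hSfin : S.Finite) (hSne : S.Nonempty)
    (hconn : (G.induce S).Connected)
    (n : ℕ) (hn : 1 ≤ n) :
    (Even n →
      ({w : V | c w = true ∧ sInf ((fun s => G.dist w s) '' S) = n}.ncard : ℤ)
        = (q : ℤ) ^ (n - 1) *
            ((q : ℤ) * ((S ∩ {v : V | c v = true}).ncard : ℤ)
              - ((S ∩ {v : V | c v = false}).ncard : ℤ) + 1)) ∧
    (Odd n →
      ({w : V | c w = true ∧ sInf ((fun s => G.dist w s) '' S) = n}.ncard : ℤ)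
        = (q : ℤ) ^ (n - 1) *
            ((q : ℤ) * ((S ∩ {v : V | c v = false}).ncard : ℤ)
              - ((S ∩ {v : V | c v = true}).ncard : ℤ) + 1)) := by
  have key := Stmt10.count_formula hG c hc hSne hSfin hconn hreg n hn true
  simp only [Bool.not_true] at key
  have hsets : {w : V | c w = true ∧ sInf ((fun s => G.dist w s) '' S) = n}
      = {w : V | c w = true ∧ Stmt10.lev G S w = n} := rfl
  rw [hsets]
  constructor
  · intro hev
    rw [key, if_pos hev]
  · intro hodd
    rw [key, if_neg (Nat.not_even_iff_odd.mpr hodd)]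
end

section
/- Let K be a field and V a 2-dimensional K-vector space with dual space V*. Let a : V → V* and b : V* → V be linear isomorphisms that are self-adjoint, i.e. (a u)(w) = (a w)(u) for all u, w ∈ V and ξ(b η) = η(b ξ) for all ξ, η ∈ V*. Assume the characteristic polynomial of the composite b ∘ a : V → V is separable (equivalently, b ∘ a has two distinct eigenvalues in an algebraic closure of K). Then there is no nonzero vector v ∈ V such that (a v)(v) = 0 and (a v)(b(a v)) = 0; that is, no nonzero v is isotropic for a while a v is isotropic for b. -/
open Polynomial Module

/-- Let `V` be a 2-dimensional vector space over a field `K`, and let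
`a : V → V*`, `b : V* → V` be self-adjoint linear isomorphisms such that the
characteristic polynomial of `b ∘ a` is separable. Then no nonzero `v ∈ V` is
isotropic for `a` with `a v` isotropic for `b`. -/
theorem stmt_12 {K V : Type*} [Field K] [AddCommGroup V] [Module K V]
    [Module.Finite K V] (h2 : Module.finrank K V = 2)
    (a : V →ₗ[K] Module.Dual K V) (b : Module.Dual K V →ₗ[K] V)
    (hab : Function.Bijective a) (hbb : Function.Bijective b)
    (hsa : ∀ u w : V, a u w = a w u)
    (hsb : ∀ ξ η : Module.Dual K V, ξ (b η) = η (b ξ))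
    (hsep : (LinearMap.charpoly (b ∘ₗ a)).Separable) :
    ¬ ∃ v : V, v ≠ 0 ∧ a v v = 0 ∧ a v (b (a v)) = 0 := by
  rintro ⟨v, hv, hvv, hvbv⟩
  have hav : a v ≠ 0 := fun h => hv (hab.injective (by simpa using h))
  obtain ⟨u, hu⟩ : ∃ u, a v u ≠ 0 := by
    by_contra h
    push_neg at h
    exact hav (LinearMap.ext h)
  have hvker : v ∈ LinearMap.ker (a v) := by simpa using hvv
  have hfker : b (a v) ∈ LinearMap.ker (a v) := by simpa using hvbv
  have hker1 : Module.finrank K (LinearMap.ker (a v)) = 1 := by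
    have hsurj : Function.Surjective (a v) := by
      intro y
      exact ⟨(y / (a v u)) • u, by simp [map_smul]; field_simp⟩
    have h := LinearMap.finrank_range_add_finrank_ker (a v)
    rw [LinearMap.range_eq_top.mpr hsurj, finrank_top, Module.finrank_self, h2] at h
    omega
  have hspan : Submodule.span K {v} = LinearMap.ker (a v) := by
    apply Submodule.eq_of_le_of_finrank_eq
    · simpa [Submodule.span_le] using hvker
    · rw [finrank_span_singleton hv, hker1]
  obtain ⟨c, hc⟩ : ∃ c : K, c • v = b (a v) :=
    Submodule.mem_span_singleton.mp (hspan ▸ hfker)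
  -- v, u are linearly independent
  have hli : LinearIndependent K ![v, u] := by
    rw [LinearIndependent.pair_iff]
    intro s t hst
    have h1 : a v (s • v + t • u) = 0 := by rw [hst]; simp
    rw [map_add, map_smul, map_smul] at h1
    simp only [smul_eq_mul, hvv, mul_zero, zero_add] at h1
    have ht : t = 0 := by
      rcases mul_eq_zero.mp h1 with h | h
      · exact h
      · exact absurd h hu
    subst ht
    have hs : s = 0 := by
      by_contra hs
      apply hv
      have : s • v = 0 := by simpa using hst
      simpa [hs] using congrArg (s⁻¹ • ·) this
    exact ⟨hs, rfl⟩
  have hcard : Fintype.card (Fin 2) = Module.finrank K V := by simp [h2]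
  let B : Basis (Fin 2) K V := basisOfLinearIndependentOfCardEqFinrank hli hcard
  have hB0 : B 0 = v := by simp [B, coe_basisOfLinearIndependentOfCardEqFinrank]
  have hB1 : B 1 = u := by simp [B, coe_basisOfLinearIndependentOfCardEqFinrank]
  set f : V →ₗ[K] V := b ∘ₗ a with hf
  have hfv : f v = c • v := by rw [hf]; exact hc.symm
  -- representation of f u
  have hrep : f u = (B.repr (f u) 0) • v + (B.repr (f u) 1) • u := by
    conv_lhs => rw [← B.sum_repr (f u)]
    rw [Fin.sum_univ_two, hB0, hB1]
  have havfu : a v (f u) = c * a v u := by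
    have : a v (b (a u)) = a u (b (a v)) := hsb (a v) (a u)
    rw [hf]
    simp only [LinearMap.comp_apply]
    rw [this, ← hc, map_smul, smul_eq_mul, hsa u v]
  have hy : B.repr (f u) 1 = c := by
    have h1 : a v (f u) = (B.repr (f u) 0) * a v v + (B.repr (f u) 1) * a v u := by
      conv_lhs => rw [hrep]
      rw [map_add, map_smul, map_smul]; rfl
    rw [havfu, hvv, mul_zero, zero_add] at h1
    exact mul_right_cancel₀ hu h1.symm
  -- matrix of f
  set M : Matrix (Fin 2) (Fin 2) K := LinearMap.toMatrix B B f with hM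
  have hM00 : M 0 0 = c := by
    rw [hM, LinearMap.toMatrix_apply, hB0, hfv, map_smul]
    simp [hB0.symm ▸ B.repr_self 0]
  have hM10 : M 1 0 = 0 := by
    rw [hM, LinearMap.toMatrix_apply, hB0, hfv, map_smul]
    simp [hB0.symm ▸ B.repr_self 0]
  have hM11 : M 1 1 = c := by
    rw [hM, LinearMap.toMatrix_apply, hB1, hy]
  have hcp : LinearMap.charpoly f = (X - C c) ^ 2 := by
    rw [← LinearMap.charpoly_toMatrix f B, ← hM, Matrix.charpoly, Matrix.det_fin_two]
    rw [Matrix.charmatrix_apply_eq, Matrix.charmatrix_apply_eq,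
      Matrix.charmatrix_apply_ne _ _ _ (by decide), Matrix.charmatrix_apply_ne _ _ _ (by decide),
      hM00, hM11, hM10]
    ring_nf
    simp
  rw [hcp] at hsep
  have hsq := hsep.squarefree
  have := hsq (X - C c) (by rw [← sq]) 
  exact Polynomial.not_isUnit_X_sub_C c this
end

section
/- Let q be an odd prime power and F = F_q. Let V = V₁ ⊕ V₂, where V₁ and V₂ are 2-dimensional F-vector spaces with bases (e₁, f₁) and (e₂, f₂) respectively, and let ω be the symplectic (nondegenerate alternating bilinear) form on V for which ω(e₁,f₁) = ω(e₂,f₂) = 1 and V₁ ⊥ V₂. Let X₁, X₂ be F-linear endomorphisms of V₁, V₂ respectively, each having irreducible characteristic polynomial over F, with tr X₁ = tr X₂, and let X = X₁ ⊕ X₂ act on V. Then the number of one-dimensional subspaces L of V such that ω(X v, v) = 0 for all v ∈ L (equivalently, X·L ⊆ L^⊥) equals (q + 1)². -/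
set_option linter.unusedSectionVars false

open Polynomial

namespace Stmt14Aux

variable {F : Type*} [Field F] [Fintype F]

/-- multiplication on `F × F` modelling `F[x]/(x² - t x + d)`. -/
def kmul (t d : F) (p r : F × F) : F × F :=
  (p.1 * r.1 - d * p.2 * r.2, p.1 * r.2 + p.2 * r.1 + t * p.2 * r.2)

/-- the norm form. -/
def knorm (t d : F) (p : F × F) : F :=
  p.1 ^ 2 + t * p.1 * p.2 + d * p.2 ^ 2

/-- conjugation. -/
def kconj (t : F) (p : F × F) : F × F := (p.1 + t * p.2, -p.2)

lemma knorm_mul (t d : F) (p r : F × F) :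
    knorm t d (kmul t d p r) = knorm t d p * knorm t d r := by
  simp only [knorm, kmul]; ring

lemma kmul_comm (t d : F) (p r : F × F) : kmul t d p r = kmul t d r p := by
  simp only [kmul]; exact Prod.ext (by ring) (by ring)

lemma kmul_assoc (t d : F) (p r s : F × F) :
    kmul t d (kmul t d p r) s = kmul t d p (kmul t d r s) := by
  simp only [kmul]; exact Prod.ext (by ring) (by ring)

lemma kmul_conj (t d : F) (p : F × F) :
    kmul t d p (kconj t p) = (knorm t d p, 0) := by
  simp only [knorm, kmul, kconj]; exact Prod.ext (by ring) (by ring)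

lemma knorm_conj (t d : F) (p : F × F) : knorm t d (kconj t p) = knorm t d p := by
  simp only [knorm, kconj]; ring

lemma kmul_scalar_right (t d : F) (p : F × F) (c : F) :
    kmul t d p (c, 0) = c • p := by
  simp only [kmul, Prod.smul_def, smul_eq_mul]
  exact Prod.ext (by ring) (by ring)

lemma kmul_smul_right (t d : F) (p r : F × F) (c : F) :
    kmul t d p (c • r) = c • kmul t d p r := by
  simp only [kmul, Prod.smul_def, smul_eq_mul]
  exact Prod.ext (by ring) (by ring)

lemma knorm_smul (t d : F) (p : F × F) (c : F) :
    knorm t d (c • p) = c ^ 2 * knorm t d p := by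
  simp only [knorm, Prod.smul_def, smul_eq_mul]; ring

lemma knorm_eq_zero {t d : F} (hroot : ∀ x : F, x ^ 2 - t * x + d ≠ 0) {p : F × F}
    (h : knorm t d p = 0) : p = 0 := by
  simp only [knorm] at h
  rcases eq_or_ne p.2 0 with h2 | h2
  · have h1 : p.1 = 0 := by
      have hsq : p.1 ^ 2 = 0 := by rw [h2] at h; linear_combination h
      exact pow_eq_zero_iff (by norm_num) |>.mp hsq
    exact Prod.ext h1 (by simpa using h2)
  · exfalso
    apply hroot (-p.1 / p.2)
    have hrw : (-p.1 / p.2) ^ 2 - t * (-p.1 / p.2) + d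
        = (p.1 ^ 2 + t * p.1 * p.2 + d * p.2 ^ 2) / p.2 ^ 2 := by
      field_simp; ring
    rw [hrw, h, zero_div]

lemma knorm_surjective (t d : F) (hodd : Fintype.card F % 2 = 1)
    (hroot : ∀ x : F, x ^ 2 - t * x + d ≠ 0) (c : F) :
    ∃ p : F × F, knorm t d p = c := by
  have h2 : (2 : F) ≠ 0 := by
    have : ringChar F ≠ 2 := by
      intro hrc
      have := FiniteField.even_card_of_char_two hrc
      omega
    have h2' := Ring.two_ne_zero this
    norm_num at h2' ⊢
    exact h2'
  set s : F := d - (t / 2) ^ 2 with hs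
  have hsne : s ≠ 0 := by
    intro h0
    apply hroot (t / 2)
    have : (t / 2) ^ 2 - t * (t / 2) + d = d - (t/2)^2 := by field_simp; ring
    rw [this, ← hs, h0]
  obtain ⟨a, b, hab⟩ := FiniteField.exists_root_sum_quadratic
    (f := X ^ 2 - C c) (g := C s * X ^ 2)
    (by rw [Polynomial.degree_X_pow_sub_C (by norm_num : 0 < 2) c]; rfl)
    (by rw [Polynomial.degree_C_mul_X_pow _ hsne]; rfl)
    hodd
  refine ⟨(a - (t / 2) * b, b), ?_⟩
  simp only [eval_mul, eval_sub, eval_pow, eval_X, eval_C] at hab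
  simp only [knorm]
  have : (a - t / 2 * b) ^ 2 + t * (a - t / 2 * b) * b + d * b ^ 2
      = a ^ 2 + s * b ^ 2 := by rw [hs]; field_simp; ring
  rw [this]; linear_combination hab

lemma count_fiber (t d : F) (hodd : Fintype.card F % 2 = 1)
    (hroot : ∀ x : F, x ^ 2 - t * x + d ≠ 0) {e : F} (he : e ≠ 0) :
    Nat.card {p : F × F // knorm t d p = e} = Fintype.card F + 1 := by
  classical
  have hfib : ∀ (e₁ e₂ : F), e₁ ≠ 0 → e₂ ≠ 0 →
      Nat.card {p : F × F // knorm t d p = e₁}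
        = Nat.card {p : F × F // knorm t d p = e₂} := by
    intro e₁ e₂ h1 h2
    obtain ⟨r, hr⟩ := knorm_surjective t d hodd hroot (e₂ / e₁)
    have hner : e₂ / e₁ ≠ 0 := div_ne_zero h2 h1
    apply Nat.card_congr
    refine Equiv.ofBijective (fun s => ⟨kmul t d s.1 r, by
      rw [knorm_mul, s.2, hr]; field_simp⟩) ⟨?_, ?_⟩
    · intro s s' hss
      have h' : kmul t d s.1 r = kmul t d s'.1 r := congrArg Subtype.val hss
      have h2' : kmul t d (kmul t d s.1 r) (kconj t r)
          = kmul t d (kmul t d s'.1 r) (kconj t r) := by rw [h']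
      rw [kmul_assoc, kmul_assoc, kmul_conj, hr, kmul_scalar_right,
        kmul_scalar_right] at h2'
      exact Subtype.ext (smul_right_injective _ hner h2')
    · rintro ⟨s', hs'⟩
      refine ⟨⟨(e₂ / e₁)⁻¹ • kmul t d s' (kconj t r), ?_⟩, ?_⟩
      · rw [knorm_smul, knorm_mul, knorm_conj, hs', hr]
        field_simp
      · apply Subtype.ext
        show kmul t d ((e₂ / e₁)⁻¹ • kmul t d s' (kconj t r)) r = s'
        rw [kmul_comm, kmul_smul_right, kmul_comm t d s' (kconj t r), ← kmul_assoc,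
          kmul_conj, hr, kmul_comm t d _ s',
          kmul_scalar_right, smul_smul, inv_mul_cancel₀ hner, one_smul]
  have hcard0 : Fintype.card {p : F × F // knorm t d p = 0} = 1 := by
    rw [Fintype.card_eq_one_iff]
    refine ⟨⟨0, by simp [knorm]⟩, ?_⟩
    rintro ⟨p, hp⟩
    exact Subtype.ext (knorm_eq_zero hroot hp)
  set m := Fintype.card {p : F × F // knorm t d p = (1 : F)} with hm
  have htot : Fintype.card F * Fintype.card F
      = ∑ e' : F, Fintype.card {p : F × F // knorm t d p = e'} := by
    rw [← Fintype.card_sigma]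
    rw [show Fintype.card F * Fintype.card F = Fintype.card (F × F) from
      (Fintype.card_prod F F).symm]
    exact Fintype.card_congr (Equiv.sigmaFiberEquiv _).symm
  have hsum : ∑ e' : F, Fintype.card {p : F × F // knorm t d p = e'}
      = (Fintype.card F - 1) * m + 1 := by
    rw [← Finset.sum_erase_add _ _ (Finset.mem_univ (0 : F)), hcard0]
    congr 1
    rw [Finset.sum_congr rfl (fun e' he' => ?_), Finset.sum_const,
      Finset.card_erase_of_mem (Finset.mem_univ _), Finset.card_univ, smul_eq_mul]
    have hne : e' ≠ 0 := Finset.ne_of_mem_erase he'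
    have := hfib e' 1 hne one_ne_zero
    rw [Nat.card_eq_fintype_card, Nat.card_eq_fintype_card] at this
    exact this
  have hq2 : 2 ≤ Fintype.card F := Fintype.one_lt_card
  obtain ⟨k, hk⟩ : ∃ k, Fintype.card F = k + 2 := ⟨Fintype.card F - 2, by omega⟩
  have e1 : (k + 2) * (k + 2) = (k + 1) * m + 1 := by
    rw [← hk]; rw [htot, hsum, hk]; simp
  have e2 : (k + 2) * (k + 2) = (k + 1) * (k + 3) + 1 := by ring
  have e3 : (k + 1) * m = (k + 1) * (k + 3) := by omega
  have hmval : m = k + 3 := Nat.eq_of_mul_eq_mul_left (Nat.succ_pos k) e3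
  rw [hfib e 1 he one_ne_zero, Nat.card_eq_fintype_card, ← hm, hmval, hk]


section Component

variable {F V : Type*} [Field F] [Fintype F] [AddCommGroup V] [Module F V]
    [Module.Finite F V]

lemma component_main
    (hodd : Fintype.card F % 2 = 1)
    (b : Module.Basis (Fin 2) F V) (B : V →ₗ[F] V →ₗ[F] F)
    (halt : ∀ v, B v v = 0) (hb : B (b 0) (b 1) = 1)
    (f : V →ₗ[F] V) (hirr : Irreducible (LinearMap.charpoly f)) :
    (∀ v : V, v ≠ 0 → B (f v) v ≠ 0) ∧
    (∀ c : F, c ≠ 0 → Nat.card {v : V // B (f v) v = c} = Fintype.card F + 1) := by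
  classical
  have hskew : ∀ u v : V, B u v = - B v u := by
    intro u v
    have h0 := halt (u + v)
    simp only [map_add, LinearMap.add_apply, halt] at h0
    linear_combination h0
  have hdim : Module.finrank F V = 2 := by
    rw [Module.finrank_eq_card_basis b, Fintype.card_fin]
  -- charpoly decomposition
  have hmonic : (LinearMap.charpoly f).Monic := LinearMap.charpoly_monic f
  have hdeg : (LinearMap.charpoly f).natDegree = 2 := by
    rw [LinearMap.charpoly_natDegree, hdim]
  obtain ⟨t, d, hp⟩ : ∃ t d : F, LinearMap.charpoly f = X ^ 2 - C t * X + C d := by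
    refine ⟨-(LinearMap.charpoly f).coeff 1, (LinearMap.charpoly f).coeff 0, ?_⟩
    have h0 := hmonic.as_sum
    rw [hdeg] at h0
    conv_lhs => rw [h0]
    rw [Finset.sum_range_succ, Finset.sum_range_one, map_neg]
    ring
  -- no roots
  have hroot : ∀ x : F, x ^ 2 - t * x + d ≠ 0 := by
    intro x hx
    have hisroot : (LinearMap.charpoly f).IsRoot x := by
      rw [hp]; simp [IsRoot]; linear_combination hx
    obtain ⟨g, hg⟩ := (dvd_iff_isRoot.mpr hisroot)
    rcases hirr.isUnit_or_isUnit hg with hu | hu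
    · exact Polynomial.not_isUnit_X_sub_C x hu
    · have hgne : g ≠ 0 := by
        intro h0; rw [h0, mul_zero] at hg
        rw [hg] at hdeg; simp at hdeg
      have : (LinearMap.charpoly f).natDegree = 1 := by
        rw [hg, natDegree_mul (X_sub_C_ne_zero x) hgne, natDegree_X_sub_C,
          Polynomial.natDegree_eq_zero_of_isUnit hu]
      omega
  -- Cayley–Hamilton, pointwise
  have hCH : ∀ v : V, f (f v) = t • f v - d • v := by
    intro v
    have h0 := LinearMap.aeval_self_charpoly f
    rw [hp] at h0
    have h1 := LinearMap.congr_fun h0 v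
    simp only [map_add, map_sub, map_mul, map_pow, aeval_X, aeval_C,
      LinearMap.add_apply, LinearMap.sub_apply, Module.End.mul_apply,
      LinearMap.zero_apply, pow_two, Module.algebraMap_end_apply,
      LinearMap.smul_apply] at h1
    linear_combination (norm := module) h1
  -- no eigenvectors
  have heig : ∀ (c : F) (v : V), v ≠ 0 → f v = c • v → False := by
    intro c v hv hfv
    have h1 := hCH v
    rw [hfv, map_smul, hfv, smul_smul] at h1
    have h2 : (c * c - t * c + d) • v = 0 := by
      linear_combination (norm := module) h1
    rcases smul_eq_zero.mp h2 with h3 | h3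
    · exact hroot c (by linear_combination h3)
    · exact hv h3
  -- coordinate formula for B
  have hb10 : B (b 1) (b 0) = -1 := by rw [hskew, hb]
  have hform : ∀ u z : V, B u z
      = b.repr u 0 * b.repr z 1 - b.repr u 1 * b.repr z 0 := by
    intro u z
    conv_lhs => rw [← b.sum_repr u, ← b.sum_repr z]
    simp only [Fin.sum_univ_two, map_add, map_smul, LinearMap.add_apply,
      LinearMap.smul_apply, halt, hb, hb10, smul_eq_mul]
    ring
  -- if B w v = 0 with v ≠ 0 then w is a multiple of v
  have hspan : ∀ (v w : V), v ≠ 0 → B w v = 0 → ∃ c : F, w = c • v := by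
    intro v w hv h
    rw [hform] at h
    have hunz : b.repr v 0 ≠ 0 ∨ b.repr v 1 ≠ 0 := by
      by_contra hcon
      push_neg at hcon
      apply hv
      have hs := b.sum_repr v
      rw [Fin.sum_univ_two, hcon.1, hcon.2, zero_smul, zero_smul, add_zero] at hs
      exact hs.symm
    have hw := (b.sum_repr w).symm
    have hvr := (b.sum_repr v).symm
    rw [Fin.sum_univ_two] at hw hvr
    set w0 := b.repr w 0 with hw0d
    set w1 := b.repr w 1 with hw1d
    set v0 := b.repr v 0 with hv0d
    set v1 := b.repr v 1 with hv1d
    rcases hunz with h0 | h1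
    · refine ⟨w0 / v0, ?_⟩
      have e0 : w0 / v0 * v0 = w0 := by field_simp
      have e1 : w0 / v0 * v1 = w1 := by
        field_simp
        linear_combination h
      conv_rhs => rw [hvr]
      conv_lhs => rw [hw]
      rw [smul_add, smul_smul, smul_smul, e0, e1]
    · refine ⟨w1 / v1, ?_⟩
      have e1 : w1 / v1 * v1 = w1 := by field_simp
      have e0 : w1 / v1 * v0 = w0 := by
        field_simp
        linear_combination -h
      conv_rhs => rw [hvr]
      conv_lhs => rw [hw]
      rw [smul_add, smul_smul, smul_smul, e0, e1]
  have haniso : ∀ v : V, v ≠ 0 → B (f v) v ≠ 0 := by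
    intro v hv hzero
    obtain ⟨c, hc⟩ := hspan v (f v) hv hzero
    exact heig c v hv hc
  refine ⟨haniso, ?_⟩
  intro c hc
  have hv₀ne : (b 0 : V) ≠ 0 := b.ne_zero 0
  set v₀ : V := b 0 with hv₀
  set lam : F := B (f v₀) v₀ with hlam
  have hlamne : lam ≠ 0 := haniso v₀ hv₀ne
  have hfv₀ne : f v₀ ≠ 0 := fun h => heig 0 v₀ hv₀ne (by rw [h, zero_smul])
  have hli : LinearIndependent F ![v₀, f v₀] := by
    rw [linearIndependent_fin2]
    refine ⟨by simpa using hfv₀ne, ?_⟩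
    intro a ha
    simp only [Matrix.cons_val_one, Matrix.head_cons, Matrix.cons_val_zero] at ha
    rcases eq_or_ne a 0 with rfl | hane
    · rw [zero_smul] at ha; exact hv₀ne ha.symm
    · refine heig a⁻¹ v₀ hv₀ne ?_
      have h2 := congrArg (fun z => a⁻¹ • z) ha
      simp only [smul_smul, inv_mul_cancel₀ hane, one_smul] at h2
      exact h2.symm ▸ h2
  have hcard2 : Fintype.card (Fin 2) = Module.finrank F V := by simp [hdim]
  set Bb : Module.Basis (Fin 2) F V := basisOfLinearIndependentOfCardEqFinrank hli hcard2 with hBbdef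
  have hBb : ⇑Bb = ![v₀, f v₀] := coe_basisOfLinearIndependentOfCardEqFinrank hli hcard2
  set eqv : (F × F) ≃ V := (finTwoArrowEquiv F).symm.trans Bb.equivFun.symm.toEquiv with heqvdef
  have heqv : ∀ p : F × F, eqv p = p.1 • v₀ + p.2 • f v₀ := by
    intro p
    show Bb.equivFun.symm ((finTwoArrowEquiv F).symm p) = _
    rw [Module.Basis.equivFun_symm_apply, Fin.sum_univ_two]
    simp [hBb, finTwoArrowEquiv]
  have h00 : B v₀ v₀ = 0 := halt v₀
  have hff : B (f v₀) (f v₀) = 0 := halt (f v₀)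
  have h01 : B v₀ (f v₀) = -lam := by rw [hskew]
  have hexp : ∀ p : F × F, B (f (eqv p)) (eqv p) = knorm t d p * lam := by
    intro p
    have hf : f (p.1 • v₀ + p.2 • f v₀) = p.1 • f v₀ + p.2 • (t • f v₀ - d • v₀) := by
      rw [map_add, map_smul, map_smul, hCH]
    rw [heqv, hf]
    simp only [knorm, map_add, map_smul, map_sub, smul_sub, LinearMap.add_apply,
      LinearMap.smul_apply, LinearMap.sub_apply, smul_eq_mul, h00, hff, h01,
      ← hlam]
    ring
  have hkey : Nat.card {v : V // B (f v) v = c}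
      = Nat.card {p : F × F // knorm t d p = c / lam} := by
    apply Nat.card_congr
    exact (Equiv.subtypeEquiv eqv (fun p => by
      rw [hexp, eq_div_iff hlamne])).symm
  rw [hkey]
  exact count_fiber t d hodd hroot (div_ne_zero hc hlamne)

end Component

lemma exists_gen {F W : Type*} [Field F] [AddCommGroup W] [Module F W] [Module.Finite F W]
    (L : Submodule F W) (hL : Module.finrank F L = 1) :
    ∃ v : W, v ≠ 0 ∧ Submodule.span F {v} = L := by
  have hnt : Nontrivial L := Module.nontrivial_of_finrank_pos (R := F) (by omega)
  obtain ⟨x, hx⟩ := exists_ne (0 : L)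
  have hxW : (x : W) ≠ 0 := fun h => hx (Subtype.ext h)
  refine ⟨(x : W), hxW, ?_⟩
  apply Submodule.eq_of_le_of_finrank_eq
  · rw [Submodule.span_le, Set.singleton_subset_iff]; exact x.2
  · rw [finrank_span_singleton hxW, hL]

end Stmt14Aux

/-- Let `F = 𝔽_q` with `q` odd, `V = V₁ ⊕ V₂` with `V₁, V₂` 2-dimensional with bases
`(e₁,f₁) = (b₁ 0, b₁ 1)` and `(e₂,f₂) = (b₂ 0, b₂ 1)`, and `ω` the symplectic form
with `ω(e₁,f₁) = ω(e₂,f₂) = 1` and `V₁ ⊥ V₂`. If `X₁, X₂` have irreducible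
characteristic polynomials and equal traces, and `X = X₁ ⊕ X₂`, then the number of
lines `L ⊆ V` with `ω(X v, v) = 0` for all `v ∈ L` equals `(q+1)²`. -/
theorem stmt_14 {F V₁ V₂ : Type*} [Field F] [Fintype F]
    (q : ℕ) (hq : Fintype.card F = q) (hodd : Odd q)
    [AddCommGroup V₁] [Module F V₁] [AddCommGroup V₂] [Module F V₂]
    [Module.Finite F V₁] [Module.Finite F V₂]
    (b₁ : Module.Basis (Fin 2) F V₁) (b₂ : Module.Basis (Fin 2) F V₂)
    (ω : LinearMap.BilinForm F (V₁ × V₂))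
    (halt : ∀ v : V₁ × V₂, ω v v = 0)
    (h₁ : ω (b₁ 0, 0) (b₁ 1, 0) = 1)
    (h₂ : ω (0, b₂ 0) (0, b₂ 1) = 1)
    (hperp : ∀ (x : V₁) (y : V₂), ω (x, 0) (0, y) = 0)
    (X₁ : V₁ →ₗ[F] V₁) (X₂ : V₂ →ₗ[F] V₂)
    (hirr₁ : Irreducible (LinearMap.charpoly X₁))
    (hirr₂ : Irreducible (LinearMap.charpoly X₂))
    (htr : LinearMap.trace F V₁ X₁ = LinearMap.trace F V₂ X₂) :
    Nat.card {L : Submodule F (V₁ × V₂) //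
        Module.finrank F L = 1 ∧
        ∀ v ∈ L, ω (LinearMap.prodMap X₁ X₂ v) v = 0}
      = (q + 1) ^ 2 := by
  classical
  subst hq
  set q := Fintype.card F with hq
  have hoddF : Fintype.card F % 2 = 1 := Nat.odd_iff.mp hodd
  haveI : Finite V₁ := Module.finite_of_finite F
  haveI : Finite V₂ := Module.finite_of_finite F
  haveI : Fintype V₁ := Fintype.ofFinite V₁
  haveI : Fintype V₂ := Fintype.ofFinite V₂
  -- the two restricted forms
  set B₁ : V₁ →ₗ[F] V₁ →ₗ[F] F :=
    ω.compl₁₂ (LinearMap.inl F V₁ V₂) (LinearMap.inl F V₁ V₂) with hB₁def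
  set B₂ : V₂ →ₗ[F] V₂ →ₗ[F] F :=
    ω.compl₁₂ (LinearMap.inr F V₁ V₂) (LinearMap.inr F V₁ V₂) with hB₂def
  have hB₁ : ∀ x y : V₁, B₁ x y = ω (x, 0) (y, 0) := by
    intro x y; simp [hB₁def, LinearMap.compl₁₂_apply]
  have hB₂ : ∀ x y : V₂, B₂ x y = ω (0, x) (0, y) := by
    intro x y; simp [hB₂def, LinearMap.compl₁₂_apply]
  obtain ⟨haniso₁, hcount₁⟩ := Stmt14Aux.component_main hoddF b₁ B₁
    (fun v => by rw [hB₁]; exact halt (v, 0)) (by rw [hB₁]; exact h₁) X₁ hirr₁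
  obtain ⟨haniso₂, hcount₂⟩ := Stmt14Aux.component_main hoddF b₂ B₂
    (fun v => by rw [hB₂]; exact halt (0, v)) (by rw [hB₂]; exact h₂) X₂ hirr₂
  have hskew : ∀ u v : V₁ × V₂, ω u v = -ω v u := by
    intro u v
    have h0 := halt (u + v)
    simp only [map_add, LinearMap.add_apply, halt] at h0
    linear_combination h0
  -- splitting of the quadratic form
  have hQ' : ∀ (x : V₁) (y : V₂), ω (LinearMap.prodMap X₁ X₂ (x, y)) (x, y)
      = B₁ (X₁ x) x + B₂ (X₂ y) y := by
    intro x y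
    have h1 : ((x, y) : V₁ × V₂) = (x, 0) + (0, y) := by simp
    have h2 : LinearMap.prodMap X₁ X₂ (x, y) = ((X₁ x, 0) : V₁ × V₂) + (0, X₂ y) := by
      simp [LinearMap.prodMap_apply]
    have hstep : ω (LinearMap.prodMap X₁ X₂ (x, y)) (x, y)
        = ω (((X₁ x, 0) : V₁ × V₂) + (0, X₂ y)) (((x, 0) : V₁ × V₂) + (0, y)) := by
      rw [h2, h1]
    rw [hstep]
    simp only [map_add, LinearMap.add_apply]
    have hp1 : ω (X₁ x, (0 : V₂)) ((0 : V₁), y) = 0 := hperp _ _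
    have hp2 : ω ((0 : V₁), X₂ y) (x, (0 : V₂)) = 0 := by
      rw [hskew, hperp, neg_zero]
    rw [hp1, hp2, hB₁, hB₂]
    ring
  have hQ : ∀ v : V₁ × V₂, ω (LinearMap.prodMap X₁ X₂ v) v
      = B₁ (X₁ v.1) v.1 + B₂ (X₂ v.2) v.2 := by
    intro v
    have := hQ' v.1 v.2
    rwa [Prod.mk.eta] at this
  -- scaling
  have hscale : ∀ (a : F) (v : V₁ × V₂), ω (LinearMap.prodMap X₁ X₂ (a • v)) (a • v)
      = a * (a * ω (LinearMap.prodMap X₁ X₂ v) v) := by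
    intro a v
    rw [map_smul]
    simp only [map_smul, LinearMap.smul_apply, smul_eq_mul]
  -- the isotropic nonzero vectors
  have eS : {v : V₁ × V₂ // v ≠ 0 ∧ ω (LinearMap.prodMap X₁ X₂ v) v = 0} ≃
      Σ c : {c : F // c ≠ 0},
        {x : V₁ // B₁ (X₁ x) x = c.1} × {y : V₂ // B₂ (X₂ y) y = -c.1} := by
    refine Equiv.ofBijective
      (fun v => ⟨⟨B₁ (X₁ v.1.1) v.1.1, ?_⟩, ⟨v.1.1, rfl⟩, ⟨v.1.2, ?_⟩⟩) ⟨?_, ?_⟩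
    · intro h0
      have hx : v.1.1 = 0 := by
        by_contra hxx
        exact haniso₁ v.1.1 hxx h0
      have hy : v.1.2 = 0 := by
        by_contra hyy
        apply haniso₂ v.1.2 hyy
        have := hQ v.1
        rw [v.2.2] at this
        linear_combination -this - h0
      exact v.2.1 (Prod.ext hx hy)
    · have := hQ v.1
      rw [v.2.2] at this
      linear_combination -this
    · intro v w h
      have h' := congrArg (fun z => (z.2.1.1, z.2.2.1)) h
      simp only [Prod.mk.injEq] at h'
      exact Subtype.ext (Prod.ext h'.1 h'.2)
    · rintro ⟨⟨c, hc⟩, ⟨x, hx⟩, ⟨y, hy⟩⟩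
      have hx' : B₁ (X₁ x) x = c := hx
      have hy' : B₂ (X₂ y) y = -c := hy
      obtain rfl := hx'.symm
      refine ⟨⟨(x, y), ?_, ?_⟩, rfl⟩
      · intro h0
        have h01 : x = 0 := congrArg Prod.fst h0
        apply hc
        rw [h01]
        simp
      · rw [hQ]
        simp only
        rw [hy']
        ring
  -- card of isotropic nonzero vectors
  have hcardS : Nat.card {v : V₁ × V₂ // v ≠ 0 ∧ ω (LinearMap.prodMap X₁ X₂ v) v = 0}
      = (q - 1) * ((q + 1) * (q + 1)) := by
    rw [Nat.card_congr eS, Nat.card_eq_fintype_card, Fintype.card_sigma]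
    have hterm : ∀ c : {c : F // c ≠ 0},
        Fintype.card ({x : V₁ // B₁ (X₁ x) x = c.1} × {y : V₂ // B₂ (X₂ y) y = -c.1})
          = (q + 1) * (q + 1) := by
      intro c
      rw [Fintype.card_prod]
      have hc1 := hcount₁ c.1 c.2
      have hc2 := hcount₂ (-c.1) (neg_ne_zero.mpr c.2)
      rw [Nat.card_eq_fintype_card] at hc1 hc2
      rw [hc1, hc2]
    rw [Finset.sum_congr rfl (fun c _ => hterm c), Finset.sum_const, smul_eq_mul,
      Finset.card_univ]
    congr 1
    rw [Fintype.card_subtype_compl, Fintype.card_subtype_eq]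
  -- relate lines to vectors
  have hgen : ∀ L : {L : Submodule F (V₁ × V₂) //
      Module.finrank F L = 1 ∧ ∀ v ∈ L, ω (LinearMap.prodMap X₁ X₂ v) v = 0},
      ∃ v : V₁ × V₂, v ≠ 0 ∧ Submodule.span F {v} = L.1 :=
    fun L => Stmt14Aux.exists_gen L.1 L.2.1
  choose g hg0 hgspan using hgen
  have hcardL : Nat.card {v : V₁ × V₂ // v ≠ 0 ∧ ω (LinearMap.prodMap X₁ X₂ v) v = 0}
      = Nat.card {L : Submodule F (V₁ × V₂) //
          Module.finrank F L = 1 ∧ ∀ v ∈ L, ω (LinearMap.prodMap X₁ X₂ v) v = 0}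
        * (q - 1) := by
    have hcu : Nat.card {u : F // u ≠ 0} = q - 1 := by
      rw [Nat.card_eq_fintype_card, Fintype.card_subtype_compl, Fintype.card_subtype_eq]
    rw [← hcu, ← Nat.card_prod]
    have hprop2 : ∀ Lu : {L : Submodule F (V₁ × V₂) //
        Module.finrank F L = 1 ∧ ∀ v ∈ L, ω (LinearMap.prodMap X₁ X₂ v) v = 0}
          × {u : F // u ≠ 0},
        ω (LinearMap.prodMap X₁ X₂ (Lu.2.1 • g Lu.1)) (Lu.2.1 • g Lu.1) = 0 := by
      intro Lu
      have hmem : g Lu.1 ∈ Lu.1.1 := (hgspan Lu.1) ▸ Submodule.mem_span_singleton_self _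
      rw [hscale, Lu.1.2.2 (g Lu.1) hmem]
      ring
    refine (Nat.card_congr (Equiv.ofBijective
      (fun Lu => ⟨Lu.2.1 • g Lu.1, smul_ne_zero Lu.2.2 (hg0 Lu.1), hprop2 Lu⟩)
      ⟨?_, ?_⟩)).symm
    · intro a b h
      have hv := congrArg Subtype.val h
      simp only at hv
      have hLeq : a.1 = b.1 := by
        apply Subtype.ext
        rw [← hgspan a.1, ← hgspan b.1,
          ← Submodule.span_singleton_smul_eq (isUnit_iff_ne_zero.mpr a.2.2) (g a.1),
          ← Submodule.span_singleton_smul_eq (isUnit_iff_ne_zero.mpr b.2.2) (g b.1), hv]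
      have hgeq : g a.1 = g b.1 := congrArg g hLeq
      rw [← hgeq] at hv
      have hu : a.2.1 = b.2.1 := smul_left_injective F (hg0 a.1) hv
      exact Prod.ext hLeq (Subtype.ext hu)
    · rintro ⟨v, hv0, hvQ⟩
      have hPL : Module.finrank F (Submodule.span F {v}) = 1 ∧
          ∀ w ∈ Submodule.span F {v}, ω (LinearMap.prodMap X₁ X₂ w) w = 0 := by
        refine ⟨finrank_span_singleton hv0, ?_⟩
        intro w hw
        obtain ⟨c, rfl⟩ := Submodule.mem_span_singleton.mp hw
        rw [hscale, hvQ]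
        ring
      set Ls : {L : Submodule F (V₁ × V₂) //
          Module.finrank F L = 1 ∧ ∀ v ∈ L, ω (LinearMap.prodMap X₁ X₂ v) v = 0} :=
        ⟨Submodule.span F {v}, hPL⟩ with hLs
      have hvmem : v ∈ Submodule.span F {g Ls} := by
        rw [hgspan Ls]
        exact Submodule.mem_span_singleton_self v
      obtain ⟨c, hcv⟩ := Submodule.mem_span_singleton.mp hvmem
      have hcne : c ≠ 0 := by
        intro h0
        rw [h0, zero_smul] at hcv
        exact hv0 hcv.symm
      exact ⟨⟨Ls, ⟨c, hcne⟩⟩, Subtype.ext hcv⟩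
  have hq2 : 2 ≤ q := Fintype.one_lt_card
  rw [hcardS] at hcardL
  have hfin : Nat.card {L : Submodule F (V₁ × V₂) //
      Module.finrank F L = 1 ∧ ∀ v ∈ L, ω (LinearMap.prodMap X₁ X₂ v) v = 0}
        = (q + 1) * (q + 1) := by
    have hpos : 0 < q - 1 := by omega
    apply Nat.eq_of_mul_eq_mul_left hpos
    rw [mul_comm (q - 1) _, ← hcardL, mul_comm]
  rw [hfin, pow_two]
end

section
/- Let A = [[0, −1], [1, 0]] and B = [[0, 1], [−1, 0]] be 2×2 matrices over the field ℚ₂ of 2-adic numbers. Then there exists an invertible matrix g ∈ GL₂(ℚ₂) with g⁻¹·A·g = B, but there is no matrix g ∈ GL₂(ℚ₂) with det g = 1 satisfying g⁻¹·A·g = B; that is, A and B are conjugate in GL₂(ℚ₂) but not in SL₂(ℚ₂). -/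
lemma zmod4_aux : ∀ x y : ZMod (2^2), x^2 + y^2 ≠ -1 := by decide

lemma padicInt_aux (x y : ℤ_[2]) : x^2 + y^2 ≠ -1 := by
  intro h
  apply zmod4_aux (PadicInt.toZModPow 2 x) (PadicInt.toZModPow 2 y)
  rw [← map_pow, ← map_pow, ← map_add, h, map_neg, map_one]

lemma padic_aux' (a b : ℚ_[2]) (hba : ‖b‖ ≤ ‖a‖) : a^2 + b^2 ≠ -1 := by
  intro h
  by_cases ha : ‖a‖ ≤ 1
  · have hb : ‖b‖ ≤ 1 := hba.trans ha
    apply padicInt_aux (⟨a, ha⟩ : ℤ_[2]) (⟨b, hb⟩ : ℤ_[2])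
    exact Subtype.ext (by push_cast; exact h)
  · push_neg at ha
    have ha0 : a ≠ 0 := by
      intro h0; rw [h0, norm_zero] at ha; linarith
    have hx : ‖b / a‖ ≤ 1 := by
      rw [norm_div, div_le_one (by linarith)]; linarith
    have hy : ‖a⁻¹‖ ≤ 1 := by
      rw [norm_inv]
      exact inv_le_one_of_one_le₀ ha.le
    apply padicInt_aux (⟨b / a, hx⟩ : ℤ_[2]) (⟨a⁻¹, hy⟩ : ℤ_[2])
    apply Subtype.ext
    change (b / a) ^ 2 + a⁻¹ ^ 2 = -1
    push_cast
    field_simp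
    linear_combination h

lemma padic_aux (a b : ℚ_[2]) : a^2 + b^2 ≠ -1 := by
  rcases le_total ‖b‖ ‖a‖ with hba | hab
  · exact padic_aux' a b hba
  · rw [add_comm]; exact padic_aux' b a hab

/-- The matrices `[[0,−1],[1,0]]` and `[[0,1],[−1,0]]` over `ℚ₂` are conjugate in
`GL₂(ℚ₂)` but not in `SL₂(ℚ₂)`. -/
theorem stmt_19 :
    (∃ g : Matrix (Fin 2) (Fin 2) ℚ_[2], IsUnit g.det ∧
        g⁻¹ * !![0, -1; 1, 0] * g = !![0, 1; -1, 0]) ∧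
    ¬ (∃ g : Matrix (Fin 2) (Fin 2) ℚ_[2], g.det = 1 ∧
        g⁻¹ * !![0, -1; 1, 0] * g = !![0, 1; -1, 0]) := by
  constructor
  · refine ⟨!![1, 0; 0, -1], ?_, ?_⟩
    · rw [Matrix.det_fin_two_of]; norm_num
    · have hinv : (!![1, 0; 0, -1] : Matrix (Fin 2) (Fin 2) ℚ_[2])⁻¹ = !![1, 0; 0, -1] := by
        apply Matrix.inv_eq_right_inv
        rw [Matrix.mul_fin_two, Matrix.one_fin_two]; norm_num
      rw [hinv, Matrix.mul_fin_two, Matrix.mul_fin_two]; norm_num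
  · rintro ⟨g, hdet, hconj⟩
    have hu : IsUnit g.det := by rw [hdet]; exact isUnit_one
    have hAg : !![0, -1; 1, 0] * g = g * !![0, 1; -1, 0] := by
      have := congrArg (fun m => g * m) hconj
      simp only [← Matrix.mul_assoc, Matrix.mul_nonsing_inv g hu, Matrix.one_mul] at this
      exact this
    rw [Matrix.eta_fin_two g] at hAg
    rw [Matrix.mul_fin_two, Matrix.mul_fin_two] at hAg
    have h00 := congrFun (congrFun hAg 0) 0
    have h01 := congrFun (congrFun hAg 0) 1
    simp at h00 h01
    have hd := hdet
    rw [Matrix.det_fin_two] at hd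
    apply padic_aux (g 0 0) (g 0 1)
    rw [show g 0 0 ^ 2 + g 0 1 ^ 2 = -(g 0 0 * g 1 1 - g 0 1 * g 1 0) by
      rw [← h00, ← h01]; ring, hd]
end
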